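/- arXiv:math/9906186 — 10 statements merged into one kernel-verified Lean document; each statement's English description precedes it below -/
import Mathlib

section
/- Let A be a C*-algebra and K a closed two-sided ideal in A. If D is a dense right ideal of A, then D ∩ K is dense in K. -/
/-!
For `k ∈ K` put `a = k⋆k ∈ K` and `e = g(a)²` with `g(x) = x / (t + x)`. Since `g(x)² = x · h(x)`
with `h(0) = 0`, `e = a · h(a)` lies in `K`, and `‖e‖ ≤ 1`. The C⋆-identity gives
`‖k - k e‖² = ‖(k - k e)⋆(k - k e)‖ = sup_{x ∈ σ(a)} x (1 - g(x)²)² ≤ t`, so `e` is an approximate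
right unit for `k`. Approximating `k` by `d ∈ D` then puts `d e ∈ D ∩ K` within `‖k - k e‖ + ‖k - d‖`
of `k`.
-/

section

variable {A : Type*} [NonUnitalCStarAlgebra A]

lemma quasispectrum_star_mul_self_nonneg (k : A) :
    ∀ x ∈ quasispectrum ℝ (star k * k), 0 ≤ x :=
  let _ := CStarAlgebra.spectralOrder A
  have := CStarAlgebra.spectralOrderedRing A
  quasispectrum_nonneg_of_nonneg _ (star_mul_self_nonneg k)

lemma star_mul_self_sub_mul_cfcₙ (k : A) {φ : ℝ → ℝ} (hφ : Continuous φ) (hφ0 : φ 0 = 0) :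
    star (k - k * cfcₙ φ (star k * k)) * (k - k * cfcₙ φ (star k * k)) =
      cfcₙ (fun x ↦ x * (1 - φ x) ^ 2) (star k * k) := by
  have hsum : (fun x ↦ x * (1 - φ x) ^ 2) =
      fun x ↦ x - φ x * x - x * φ x + φ x * x * φ x := by
    funext x; ring
  have hsa : star (cfcₙ φ (star k * k)) = cfcₙ φ (star k * k) :=
    (cfcₙ_predicate φ (star k * k)).star_eq
  rw [hsum, cfcₙ_add .., cfcₙ_sub .., cfcₙ_sub .., cfcₙ_mul .., cfcₙ_mul .., cfcₙ_mul ..,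
    cfcₙ_mul .., cfcₙ_id' ℝ (star k * k), star_sub, star_mul, hsa]
  noncomm_ring

lemma sq_norm_sub_mul_cfcₙ_le (k : A) {φ : ℝ → ℝ} (hφ : Continuous φ) (hφ0 : φ 0 = 0) {C : ℝ}
    (hC : ∀ x, 0 ≤ x → x * (1 - φ x) ^ 2 ≤ C) :
    ‖k - k * cfcₙ φ (star k * k)‖ ^ 2 ≤ C := by
  rw [sq, ← CStarRing.norm_star_mul_self, star_mul_self_sub_mul_cfcₙ k hφ hφ0]
  refine norm_cfcₙ_le fun x hx ↦ ?_
  have hx0 := quasispectrum_star_mul_self_nonneg k x hx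
  rw [Real.norm_of_nonneg (by positivity)]
  exact hC x hx0

lemma mul_one_sub_div_add_sq_sq_le {t x : ℝ} (ht : 0 < t) (hx : 0 ≤ x) :
    x * (1 - (x / (t + x)) ^ 2) ^ 2 ≤ t := by
  rw [div_pow, one_sub_div (by positivity), div_pow, mul_div_assoc', div_le_iff₀ (by positivity)]
  nlinarith [mul_nonneg ht.le (sq_nonneg (x ^ 2 + t ^ 2)), mul_nonneg (pow_nonneg ht.le 4) hx]

lemma TwoSidedIdeal.exists_mem_norm_le_one_norm_sub_mul_le (K : TwoSidedIdeal A) {k : A}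
    (hk : k ∈ K) {ε : ℝ} (hε : 0 < ε) : ∃ e ∈ K, ‖e‖ ≤ 1 ∧ ‖k - k * e‖ ≤ ε := by
  set t := ε ^ 2
  have ht : 0 < t := by positivity
  set g : ℝ → ℝ := fun x ↦ x / (t + |x|)
  have hg : Continuous g := continuous_id.div (by fun_prop) fun x ↦ by positivity
  have hg_le_one : ∀ x, |g x| ≤ 1 := fun x ↦ by
    rw [abs_div, abs_of_pos (by positivity : 0 < t + |x|), div_le_one (by positivity)]
    linarith
  set h : ℝ → ℝ := fun x ↦ x / (t + |x|) ^ 2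
  have hh : Continuous h := continuous_id.div (by fun_prop) fun x ↦ by positivity
  have hgh : (fun x ↦ g x ^ 2) = fun x ↦ x * h x := by
    funext x; simp only [g, h, div_pow]; ring
  refine ⟨cfcₙ (fun x ↦ g x ^ 2) (star k * k), ?_, ?_, ?_⟩
  · rw [hgh, cfcₙ_mul (fun x ↦ x) h .., cfcₙ_id' ℝ (star k * k)]
    exact K.mul_mem_right _ _ (K.mul_mem_left _ _ hk)
  · refine norm_cfcₙ_le fun x _ ↦ ?_
    rw [norm_pow, Real.norm_eq_abs]
    exact pow_le_one₀ (abs_nonneg _) (hg_le_one x)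
  · refine pow_le_pow_iff_left₀ (norm_nonneg _) hε.le two_ne_zero |>.mp ?_
    refine sq_norm_sub_mul_cfcₙ_le k (hg.pow 2) (by simp [g]) fun x hx ↦ ?_
    show x * (1 - (x / (t + |x|)) ^ 2) ^ 2 ≤ t
    rw [abs_of_nonneg hx]
    exact mul_one_sub_div_add_sq_sq_le ht hx

end

theorem stmt_0_general {A : Type*} [NonUnitalCStarAlgebra A]
    (K : TwoSidedIdeal A)
    (D : Submodule ℂ A) (hDright : ∀ d ∈ D, ∀ a : A, d * a ∈ D)
    (hDdense : Dense (D : Set A)) :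
    ∀ k ∈ K, k ∈ closure ((D : Set A) ∩ (K : Set A)) := by
  intro k hk
  refine Metric.mem_closure_iff.mpr fun ε hε ↦ ?_
  obtain ⟨e, heK, he_norm, hke⟩ := K.exists_mem_norm_le_one_norm_sub_mul_le hk (half_pos hε)
  obtain ⟨d, hdD, hkd⟩ := Metric.mem_closure_iff.mp (hDdense k) (ε / 2) (half_pos hε)
  refine ⟨d * e, ⟨hDright d hdD e, K.mul_mem_left d e heK⟩, ?_⟩
  rw [dist_eq_norm] at hkd ⊢
  calc ‖k - d * e‖ = ‖(k - k * e) + (k - d) * e‖ := by noncomm_ring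
    _ ≤ ‖k - k * e‖ + ‖k - d‖ * ‖e‖ := (norm_add_le _ _).trans (by gcongr; exact norm_mul_le _ _)
    _ ≤ ε / 2 + ‖k - d‖ * 1 := by gcongr
    _ < ε := by linarith

/-- If `K` is a closed two-sided ideal in a C*-algebra `A` and `D` is a dense
right ideal of `A` (a subspace with `D·A ⊆ D`), then `D ∩ K` is dense in `K`. -/
theorem stmt_0 {A : Type*} [NonUnitalCStarAlgebra A]
    (K : TwoSidedIdeal A) (hKclosed : IsClosed (K : Set A))
    (D : Submodule ℂ A) (hDright : ∀ d ∈ D, ∀ a : A, d * a ∈ D)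
    (hDdense : Dense (D : Set A)) :
    ∀ k ∈ K, k ∈ closure ((D : Set A) ∩ (K : Set A)) :=
  stmt_0_general K D hDright hDdense
end

section
/- Let A be a C*-algebra, K a closed essential ideal of A, and S a closed semiregular operator on A (a closed densely defined A-linear operator S : D(S) → A with D(S) a dense right ideal and S* densely defined). Then S maps D(S) ∩ K into K. -/
/-- A densely defined operator on a C*-algebra `A`, presented by a total function `toFun`
whose meaningful values are those on its domain `dom`.  The domain is a dense right ideal,
on which the operator is `ℂ`-linear and right `A`-linear (`S(a b) = (S a) b`). -/
structure UnboundedOp (A : Type*) [NonUnitalCStarAlgebra A] where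
  dom : Set A
  toFun : A → A
  dense_dom : Dense dom
  zero_mem : (0 : A) ∈ dom
  add_mem : ∀ a ∈ dom, ∀ b ∈ dom, a + b ∈ dom
  smul_mem : ∀ (c : ℂ), ∀ a ∈ dom, c • a ∈ dom
  mul_mem : ∀ a ∈ dom, ∀ x : A, a * x ∈ dom
  map_add' : ∀ a ∈ dom, ∀ b ∈ dom, toFun (a + b) = toFun a + toFun b
  map_smul' : ∀ (c : ℂ), ∀ a ∈ dom, toFun (c • a) = c • toFun a
  map_mul' : ∀ a ∈ dom, ∀ x : A, toFun (a * x) = toFun a * x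

namespace UnboundedOp

variable {A : Type*} [NonUnitalCStarAlgebra A]

/-- The domain of the adjoint of `S`, with respect to the `A`-valued inner
product `⟨a, b⟩ = a* b` on `A`: those `a` admitting `c` with `⟨c, b⟩ = ⟨a, S b⟩`
for all `b` in the domain of `S`. -/
def adjDom (S : UnboundedOp A) : Set A :=
  {a : A | ∃ c : A, ∀ b ∈ S.dom, star a * S.toFun b = star c * b}

/-- `S` is semiregular if (it is closable, which is automatic here, and) its
adjoint is densely defined. -/
def Semiregular (S : UnboundedOp A) : Prop := Dense S.adjDom

/-- `S` is a closed operator if its graph is closed. -/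
def IsClosedOp (S : UnboundedOp A) : Prop :=
  IsClosed {p : A × A | p.1 ∈ S.dom ∧ p.2 = S.toFun p.1}

end UnboundedOp

/-- An ideal `K` of `A` is essential if it has trivial annihilator. -/
def TwoSidedIdeal.Essential {A : Type*} [NonUnitalCStarAlgebra A] (K : TwoSidedIdeal A) : Prop :=
  ∀ a : A, (∀ k ∈ K, a * k = 0) → a = 0

/-!
For `b` in the domain of `S*` we have `b* (S a) = (S* b)* a`, which lies in `K` when `a` does; by
density of the domain of `S*` and closedness of `K`, `b* (S a) ∈ K` for every `b`. Taking
`b = S a` gives `(S a)* (S a) ∈ K`, and a closed ideal containing `x* x` contains `x`: indeed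
`x` is a norm limit of elements `x (x* x) z`, because `‖x - x e‖² = ‖(1 - e) x* x (1 - e)‖` is
small for `e = f(x* x)` with `f(t) = (r t)² / ((r t)² + 1)` and `r` large.
-/

section CStarIdeal

variable {A : Type*} [NonUnitalCStarAlgebra A]

lemma norm_sub_mul_cfcₙ_star_mul_self_sq_le (x : A) {f : ℝ → ℝ} (hf : Continuous f)
    (hf0 : f 0 = 0) {c : ℝ} (hc : ∀ t, |t| * (1 - f t) ^ 2 ≤ c) :
    ‖x - x * cfcₙ f (star x * x)‖ ^ 2 ≤ c := by
  set y := star x * x with hy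
  set e := cfcₙ f y
  have he : IsSelfAdjoint e := cfcₙ_predicate f y
  have key : star (x - x * e) * (x - x * e) = cfcₙ (fun t => t * (1 - f t) ^ 2) y :=
    calc star (x - x * e) * (x - x * e) = y - y * e - e * y + e * y * e := by
          rw [star_sub, star_mul, he.star_eq, hy]; noncomm_ring
      _ = cfcₙ (fun t => t - t * f t - f t * t + f t * t * f t) y := by
          rw [cfcₙ_add .., cfcₙ_sub .., cfcₙ_sub .., cfcₙ_mul .., cfcₙ_mul .., cfcₙ_mul ..,
            cfcₙ_mul .., cfcₙ_id' ℝ y]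
      _ = cfcₙ (fun t => t * (1 - f t) ^ 2) y := by congr 1; funext t; ring
  rw [sq, ← CStarRing.norm_star_mul_self, key]
  refine norm_cfcₙ_le fun t _ => ?_
  rw [Real.norm_eq_abs, abs_mul, abs_sq]
  exact hc t

lemma abs_mul_one_sub_mul_div_sq_le {r : ℝ} (hr : 0 < r) (t : ℝ) :
    |t| * (1 - t * (r ^ 2 * t / ((r * t) ^ 2 + 1))) ^ 2 ≤ r⁻¹ := by
  have hs : 1 ≤ (r * t) ^ 2 + 1 := by nlinarith [sq_nonneg (r * t)]
  have h1 : 1 - t * (r ^ 2 * t / ((r * t) ^ 2 + 1)) = ((r * t) ^ 2 + 1)⁻¹ := by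
    field_simp; ring
  have amgm : 2 * (r * |t|) ≤ (r * t) ^ 2 + 1 := by
    nlinarith [sq_nonneg (r * |t| - 1), sq_abs t]
  rw [h1, inv_pow, ← div_eq_mul_inv, div_le_iff₀ (by positivity), inv_mul_eq_div, le_div_iff₀ hr]
  nlinarith [abs_nonneg t]

lemma mem_closure_range_mul_star_mul_self_mul (x : A) :
    x ∈ closure (Set.range fun z => x * (star x * x * z)) := by
  rw [Metric.mem_closure_iff]
  intro ε hε
  set y := star x * x
  set r := 2 / ε ^ 2 with hr
  have hr0 : 0 < r := by positivity
  set g : ℝ → ℝ := fun t => r ^ 2 * t / ((r * t) ^ 2 + 1)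
  have hg : Continuous g := Continuous.div (by fun_prop) (by fun_prop) fun t => by positivity
  have hg0 : g 0 = 0 := by simp [g]
  refine ⟨_, ⟨cfcₙ g y, rfl⟩, ?_⟩
  have hyg : y * cfcₙ g y = cfcₙ (fun t => t * g t) y := by rw [cfcₙ_mul .., cfcₙ_id' ℝ y]
  have hsq : ‖x - x * (y * cfcₙ g y)‖ ^ 2 < ε ^ 2 :=
    calc ‖x - x * (y * cfcₙ g y)‖ ^ 2 ≤ r⁻¹ := by
          rw [hyg]
          exact norm_sub_mul_cfcₙ_star_mul_self_sq_le x (by fun_prop) (by simp [hg0])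
            (abs_mul_one_sub_mul_div_sq_le hr0)
      _ < ε ^ 2 := by rw [hr, inv_div]; linarith [pow_pos hε 2]
  rw [dist_eq_norm]
  exact lt_of_pow_lt_pow_left₀ 2 hε.le hsq

lemma TwoSidedIdeal.mem_of_star_mul_self_mem {K : TwoSidedIdeal A} (hK : IsClosed (K : Set A))
    {x : A} (hx : star x * x ∈ K) : x ∈ K :=
  closure_minimal (Set.range_subset_iff.2 fun _ => K.mul_mem_left _ _ (K.mul_mem_right _ _ hx))
    hK (mem_closure_range_mul_star_mul_self_mul x)

end CStarIdeal

namespace UnboundedOp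

variable {A : Type*} [NonUnitalCStarAlgebra A]

lemma star_mul_apply_mem_of_mem_adjDom (S : UnboundedOp A) {K : TwoSidedIdeal A} {a b : A}
    (ha : a ∈ S.dom) (haK : a ∈ K) (hb : b ∈ S.adjDom) : star b * S.toFun a ∈ K := by
  obtain ⟨c, hc⟩ := hb
  rw [hc a ha]
  exact K.mul_mem_left _ _ haK

lemma Semiregular.star_mul_apply_mem {S : UnboundedOp A} (hS : S.Semiregular)
    {K : TwoSidedIdeal A} (hK : IsClosed (K : Set A)) {a : A} (ha : a ∈ S.dom) (haK : a ∈ K)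
    (b : A) : star b * S.toFun a ∈ K :=
  hS.induction (fun _ hb => S.star_mul_apply_mem_of_mem_adjDom ha haK hb)
    (hK.preimage (continuous_star.mul continuous_const)) b

end UnboundedOp

theorem stmt_2_general {A : Type*} [NonUnitalCStarAlgebra A]
    (K : TwoSidedIdeal A) (hKc : IsClosed (K : Set A))
    (S : UnboundedOp A) (hS : S.Semiregular) :
    ∀ a ∈ S.dom, a ∈ K → S.toFun a ∈ K :=
  fun _ ha haK => K.mem_of_star_mul_self_mem hKc (hS.star_mul_apply_mem hKc ha haK _)

/-- A closed semiregular operator on a C*-algebra maps the part of its domain lying in a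
closed essential ideal `K` into `K`. -/
theorem stmt_2 {A : Type*} [NonUnitalCStarAlgebra A]
    (K : TwoSidedIdeal A) (hKc : IsClosed (K : Set A)) (hKe : K.Essential)
    (S : UnboundedOp A) (hS : S.Semiregular) (hSc : S.IsClosedOp) :
    ∀ a ∈ S.dom, a ∈ K → S.toFun a ∈ K :=
  stmt_2_general K hKc S hS
end

section
/- Let A be a C*-algebra, K a closed essential ideal, S a closed semiregular operator on A. Then D(S)·K is a core for the restriction S|_K, i.e., the closure of the restriction of S to D(S)·K equals S|_K. -/
/-!
If `a ∈ D(S) ∩ K`, then `S a ∈ K` as well: for `b` in the domain of the adjoint,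
`b* (S a) = c* a ∈ K`, and such `b` are dense. Hence `κ = a* a + (S a)* (S a)` lies in `K`, and
`e = κ (4δ + κ)⁻¹` (computed in the unitization) is an element of `K` with
`‖v - v e‖² ≤ ‖(1 - e) κ (1 - e)‖ ≤ δ` for `v ∈ {a, S a}`. So
`(a e, S (a e)) = (a e, (S a) e)` is a point of the graph of `S` on `D(S)·K` close to `(a, S a)`.
-/

open Unitization
open scoped CStarAlgebra

section Unital

variable {B : Type*} [CStarAlgebra B] [PartialOrder B] [StarOrderedRing B]

lemma norm_mul_sq_le_of_star_mul_self_le {v κ w : B} (hv : star v * v ≤ κ)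
    (hw : IsSelfAdjoint w) : ‖v * w‖ ^ 2 ≤ ‖w * κ * w‖ := by
  have hconj : star (v * w) * (v * w) = w * (star v * v) * w := by
    rw [star_mul, hw.star_eq]; noncomm_ring
  calc ‖v * w‖ ^ 2 = ‖w * (star v * v) * w‖ := by
        rw [sq, ← CStarRing.norm_star_mul_self, hconj]
    _ ≤ ‖w * κ * w‖ := by
        refine CStarAlgebra.norm_le_norm_of_nonneg_of_le (hconj ▸ star_mul_self_nonneg _) ?_
        simpa only [hw.star_eq] using star_left_conjugate_le_conjugate hv w

lemma exists_norm_conj_one_sub_mul_le {κ : B} (hκ : 0 ≤ κ) {δ : ℝ} (hδ : 0 < δ) :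
    ∃ c : B, IsSelfAdjoint (κ * c) ∧ ‖(1 - κ * c) * κ * (1 - κ * c)‖ ≤ δ := by
  have hspec : ∀ t ∈ spectrum ℝ κ, 0 ≤ t := fun t ht => spectrum_nonneg_of_nonneg hκ ht
  set g : ℝ → ℝ := fun t => (4 * δ + t)⁻¹
  set f : ℝ → ℝ := fun t => 1 - t * g t
  have hg : ContinuousOn g (spectrum ℝ κ) :=
    ContinuousOn.inv₀ (by fun_prop) fun t ht => by linarith [hspec t ht]
  have hid : ContinuousOn (fun t : ℝ => t) (spectrum ℝ κ) := continuousOn_id' _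
  have hf : ContinuousOn f (spectrum ℝ κ) := continuousOn_const.sub (hid.mul hg)
  have hκc : κ * cfc g κ = cfc (fun t => t * g t) κ := by
    rw [cfc_mul _ _ κ hid hg, cfc_id' ℝ κ]
  have hf_eq : cfc f κ = 1 - κ * cfc g κ := by
    rw [hκc, cfc_sub (fun _ => (1 : ℝ)) (fun t => t * g t) κ continuousOn_const (hid.mul hg),
      cfc_const_one ℝ κ]
  refine ⟨cfc g κ, hκc ▸ cfc_predicate _ κ, ?_⟩
  have hconj : (1 - κ * cfc g κ) * κ * (1 - κ * cfc g κ) = cfc (fun t => f t * t * f t) κ := by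
    rw [cfc_mul (fun t => f t * t) f κ (hf.mul hid) hf, cfc_mul f (fun t => t) κ hf hid,
      cfc_id' ℝ κ, hf_eq]
  rw [hconj]
  refine norm_cfc_le hδ.le fun t ht => ?_
  have ht := hspec t ht
  have hd : 0 < 4 * δ + t := by linarith
  have hft : f t = 4 * δ / (4 * δ + t) := by simp only [f, g]; field_simp; ring
  rw [hft, Real.norm_eq_abs, abs_of_nonneg (by positivity)]
  rw [show 4 * δ / (4 * δ + t) * t * (4 * δ / (4 * δ + t)) = δ * (16 * δ * t / (4 * δ + t) ^ 2) by
    field_simp; ring]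
  refine mul_le_of_le_one_right hδ.le ((div_le_one (by positivity)).2 ?_)
  -- AM-GM: `16 δ t ≤ (4 δ + t)²`
  nlinarith [sq_nonneg (4 * δ - t)]

end Unital

namespace TwoSidedIdeal

variable {A : Type*} [NonUnitalCStarAlgebra A] {K : TwoSidedIdeal A}

lemma mem_of_forall_mul_mem (hKc : IsClosed (K : Set A)) {b : A} (h : ∀ x, x * b ∈ K) :
    b ∈ K := by
  let _ := CStarAlgebra.spectralOrder A
  let _ := CStarAlgebra.spectralOrderedRing A
  exact hKc.mem_of_tendsto ((CStarAlgebra.increasingApproximateUnit A).tendsto_mul_right b)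
    (.of_forall h)

lemma smul_mem_of_isClosed (hKc : IsClosed (K : Set A)) {k : A} (hk : k ∈ K) (c : ℂ) :
    c • k ∈ K :=
  mem_of_forall_mul_mem hKc fun x => by
    rw [mul_smul_comm, ← smul_mul_assoc]
    exact K.mul_mem_left _ _ hk

lemma snd_inr_mul_mem (hKc : IsClosed (K : Set A)) {κ : A} (hκ : κ ∈ K) (c : A⁺¹) :
    ((κ : A⁺¹) * c).snd ∈ K := by
  rw [snd_mul, fst_inr, zero_smul, zero_add, snd_inr]
  exact K.add_mem (smul_mem_of_isClosed hKc hκ _) (K.mul_mem_right _ _ hκ)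

lemma exists_mem_norm_sub_mul_le (hKc : IsClosed (K : Set A)) {a b : A} (ha : a ∈ K)
    (hb : b ∈ K) {ε : ℝ} (hε : 0 < ε) :
    ∃ e ∈ K, ‖a - a * e‖ ≤ ε ∧ ‖b - b * e‖ ≤ ε := by
  let _ := CStarAlgebra.spectralOrder A⁺¹
  let _ := CStarAlgebra.spectralOrderedRing A⁺¹
  set κ : A := star a * a + star b * b
  have hκ : (κ : A⁺¹) = star (a : A⁺¹) * a + star (b : A⁺¹) * b := by
    simp only [κ, inr_add, inr_mul, inr_star]
  obtain ⟨c, hsa, hc⟩ := exists_norm_conj_one_sub_mul_le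
    (hκ ▸ add_nonneg (star_mul_self_nonneg _) (star_mul_self_nonneg _)) (pow_pos hε 2)
  have he : ((((κ : A⁺¹) * c).snd : A) : A⁺¹) = κ * c := Unitization.ext (by simp) rfl
  have key : ∀ v : A, star (v : A⁺¹) * v ≤ κ → ‖v - v * ((κ : A⁺¹) * c).snd‖ ≤ ε := by
    intro v hv
    rw [← norm_inr (𝕜 := ℂ), inr_sub, inr_mul, he, ← mul_one_sub]
    refine (pow_le_pow_iff_left₀ (norm_nonneg _) hε.le two_ne_zero).1 ?_
    exact (norm_mul_sq_le_of_star_mul_self_le hv ((IsSelfAdjoint.one _).sub hsa)).trans hc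
  refine ⟨_, snd_inr_mul_mem hKc (K.add_mem (K.mul_mem_left _ _ ha) (K.mul_mem_left _ _ hb)) c,
    key a ?_, key b ?_⟩
  · rw [hκ]; exact le_add_of_nonneg_right (star_mul_self_nonneg _)
  · rw [hκ]; exact le_add_of_nonneg_left (star_mul_self_nonneg _)

end TwoSidedIdeal

namespace UnboundedOp

variable {A : Type*} [NonUnitalCStarAlgebra A] {S : UnboundedOp A}

lemma IsClosedOp.isClosed_graph_restrict (hSc : S.IsClosedOp) {s : Set A} (hs : IsClosed s) :
    IsClosed {p : A × A | p.1 ∈ S.dom ∧ p.1 ∈ s ∧ p.2 = S.toFun p.1} := by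
  convert hSc.inter (hs.preimage continuous_fst) using 1
  ext p
  simp only [Set.mem_ofPred_eq, Set.mem_inter_iff, Set.mem_preimage]
  tauto

lemma toFun_mem_of_semiregular (hS : S.Semiregular) {K : TwoSidedIdeal A}
    (hKc : IsClosed (K : Set A)) {a : A} (ha : a ∈ S.dom) (haK : a ∈ K) : S.toFun a ∈ K := by
  have hclosed : IsClosed {y : A | star y * S.toFun a ∈ K} :=
    hKc.preimage (continuous_star.mul continuous_const)
  have hadj : S.adjDom ⊆ {y : A | star y * S.toFun a ∈ K} := by
    rintro y ⟨c, hc⟩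
    rw [Set.mem_ofPred_eq, hc a ha]
    exact K.mul_mem_left _ _ haK
  refine K.mem_of_forall_mul_mem hKc fun x => ?_
  simpa only [Set.mem_ofPred_eq, star_star] using hclosed.closure_subset_iff.2 hadj (hS (star x))

end UnboundedOp

theorem stmt_4_general {A : Type*} [NonUnitalCStarAlgebra A]
    (K : TwoSidedIdeal A) (hKc : IsClosed (K : Set A))
    (S : UnboundedOp A) (hS : S.Semiregular) (hSc : S.IsClosedOp) :
    closure {p : A × A | (∃ d ∈ S.dom, ∃ k ∈ K, p.1 = d * k) ∧ p.2 = S.toFun p.1}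
      = {p : A × A | p.1 ∈ S.dom ∧ p.1 ∈ K ∧ p.2 = S.toFun p.1} := by
  refine Set.Subset.antisymm (closure_minimal ?_ (hSc.isClosed_graph_restrict hKc)) ?_
  · rintro p ⟨⟨d, hd, k, hk, hp⟩, hp2⟩
    exact ⟨hp ▸ S.mul_mem d hd k, hp ▸ K.mul_mem_left d k hk, hp2⟩
  · rintro ⟨a, b⟩ ⟨ha, haK, hb : b = S.toFun a⟩
    subst hb
    have hSaK := S.toFun_mem_of_semiregular hS hKc ha haK
    refine Metric.mem_closure_iff.2 fun ε hε => ?_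
    obtain ⟨e, heK, hae, hSae⟩ := K.exists_mem_norm_sub_mul_le hKc haK hSaK (half_pos hε)
    refine ⟨(a * e, S.toFun (a * e)), ⟨⟨a, ha, e, heK, rfl⟩, rfl⟩, ?_⟩
    rw [Prod.dist_eq, S.map_mul' a ha e, dist_eq_norm, dist_eq_norm]
    exact max_lt (hae.trans_lt (half_lt_self hε)) (hSae.trans_lt (half_lt_self hε))

/-- `D(S)·K` is a core for the restriction `S|_K`: the closure of the graph of `S`
restricted to products `d * k` (`d ∈ D(S)`, `k ∈ K`) is the graph of `S|_K`. -/
theorem stmt_4 {A : Type*} [NonUnitalCStarAlgebra A]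
    (K : TwoSidedIdeal A) (hKc : IsClosed (K : Set A)) (hKe : K.Essential)
    (S : UnboundedOp A) (hS : S.Semiregular) (hSc : S.IsClosedOp) :
    closure {p : A × A | (∃ d ∈ S.dom, ∃ k ∈ K, p.1 = d * k) ∧ p.2 = S.toFun p.1}
      = {p : A × A | p.1 ∈ S.dom ∧ p.1 ∈ K ∧ p.2 = S.toFun p.1} :=
  stmt_4_general K hKc S hS hSc
end

section
/- Let A be a C*-algebra, K a closed essential ideal, S a closed semiregular operator on A. Then the adjoint of the restriction equals the restriction of the adjoint: (S|_K)* = S*|_K, where adjoints are taken with respect to the A-valued (resp. K-valued) inner product ⟨a,b⟩ = a*b. -/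
/-!
Both directions rest on `K` being essential and closed. If `c` represents the adjoint of `S|_K`
at `a`, then `(a* S b - c* b) k = a* S (b k) - c* (b k) = 0` for every `k ∈ K`, so
`a* S b = c* b` because `K` has trivial annihilator. Conversely, if `c` represents `S*` at
`a ∈ K`, then `c* b = a* S b ∈ K` for `b` in the dense domain of `S`, hence for all `b` since
`K` is closed; in particular `c* c ∈ K`, and closed ideals of a C*-algebra are hereditary:
`y* y ∈ K` forces `y ∈ K`, because `y` is the limit of `y f(y* y) ∈ K` for continuous functions
`f` with `f 0 = 0` approximating `1` on the spectrum.
-/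

lemma norm_sub_mul_cfc_sq_le {B : Type*} [CStarAlgebra B] (y : B) {f : ℝ → ℝ}
    (hf : Continuous f) {c : ℝ} (hc : ∀ t, 0 ≤ t → t * (1 - f t) ^ 2 ≤ c) :
    ‖y - y * cfc f (star y * y)‖ ^ 2 ≤ c := by
  set x := star y * y with hx
  have hfx : IsSelfAdjoint (cfc f x) := cfc_predicate f x
  have key : star (y - y * cfc f x) * (y - y * cfc f x) = cfc (fun t ↦ t * (1 - f t) ^ 2) x :=
    calc star (y - y * cfc f x) * (y - y * cfc f x)
        = (1 - cfc f x) * x * (1 - cfc f x) := by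
          rw [star_sub, star_mul, hfx.star_eq, hx]; noncomm_ring
      _ = cfc (fun t ↦ (1 - f t) * t * (1 - f t)) x := by
          rw [cfc_mul _ _ x, cfc_mul _ _ x, cfc_sub _ _ x, cfc_const_one ℝ x, cfc_id' ℝ x]
      _ = cfc (fun t ↦ t * (1 - f t) ^ 2) x := cfc_congr fun t _ ↦ by ring
  rw [sq, ← CStarRing.norm_star_mul_self, key]
  refine norm_cfc_le (by simpa using hc 0 le_rfl) fun t ht ↦ ?_
  have ht₀ : 0 ≤ t := spectrum_star_mul_self_nonneg t ht
  rw [Real.norm_of_nonneg (by positivity)]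
  exact hc t ht₀

lemma norm_sub_mul_cfcₙ_sq_le {A : Type*} [NonUnitalCStarAlgebra A] (y : A) {f : ℝ → ℝ}
    (hf : Continuous f) (hf₀ : f 0 = 0) {c : ℝ} (hc : ∀ t, 0 ≤ t → t * (1 - f t) ^ 2 ≤ c) :
    ‖y - y * cfcₙ f (star y * y)‖ ^ 2 ≤ c := by
  rw [← Unitization.norm_inr (𝕜 := ℂ), Unitization.inr_sub, Unitization.inr_mul,
    Unitization.real_cfcₙ_eq_cfc_inr _ f, Unitization.inr_mul, Unitization.inr_star]
  exact norm_sub_mul_cfc_sq_le _ hf hc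

lemma mul_one_sub_sq_div_add_sq_le {s t : ℝ} (hs : 0 < s) :
    t * (1 - t ^ 2 / (s ^ 2 + t ^ 2)) ^ 2 ≤ s / 2 := by
  have hd : 0 < s ^ 2 + t ^ 2 := by positivity
  have h1 : 1 - t ^ 2 / (s ^ 2 + t ^ 2) = s ^ 2 / (s ^ 2 + t ^ 2) := by field_simp; ring
  rw [h1, div_pow, mul_div_assoc', div_le_div_iff₀ (by positivity) two_pos]
  have amgm : 2 * s * t ≤ s ^ 2 + t ^ 2 := by nlinarith [sq_nonneg (s - t)]
  calc t * (s ^ 2) ^ 2 * 2 = s * (2 * s * t) * s ^ 2 := by ring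
    _ ≤ s * (s ^ 2 + t ^ 2) * (s ^ 2 + t ^ 2) := by gcongr; nlinarith
    _ = s * (s ^ 2 + t ^ 2) ^ 2 := by ring

namespace TwoSidedIdeal

variable {A : Type*} [NonUnitalCStarAlgebra A] {K : TwoSidedIdeal A}

lemma mem_of_star_mul_self_mem_s5 (hK : IsClosed (K : Set A)) {y : A} (hy : star y * y ∈ K) :
    y ∈ K := by
  rw [← SetLike.mem_coe, ← hK.closure_eq, Metric.mem_closure_iff]
  intro ε hε
  set x := star y * y
  have hden : ∀ t : ℝ, 0 < (ε ^ 2) ^ 2 + t ^ 2 := fun t ↦ by positivity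
  let g : ℝ → ℝ := fun t ↦ t / ((ε ^ 2) ^ 2 + t ^ 2)
  let f : ℝ → ℝ := fun t ↦ t ^ 2 / ((ε ^ 2) ^ 2 + t ^ 2)
  have hg : Continuous g := continuous_id.div (by fun_prop) fun t ↦ (hden t).ne'
  have hf : Continuous f := (continuous_pow 2).div (by fun_prop) fun t ↦ (hden t).ne'
  -- `f` vanishes to second order at `0`, so `f = id * g` with `g 0 = 0` and `f(x) = x g(x)`
  have hfK : cfcₙ f x ∈ K := by
    have : cfcₙ f x = x * cfcₙ g x := calc
      cfcₙ f x = cfcₙ (fun t ↦ t * g t) x := cfcₙ_congr fun t _ ↦ by simp only [f, g]; ring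
      _ = x * cfcₙ g x := by rw [cfcₙ_mul _ _ x, cfcₙ_id' ℝ x]
    rw [this]
    exact K.mul_mem_right x _ hy
  refine ⟨y * cfcₙ f x, K.mul_mem_left y _ hfK, ?_⟩
  have hbound : ‖y - y * cfcₙ f x‖ ^ 2 ≤ ε ^ 2 / 2 :=
    norm_sub_mul_cfcₙ_sq_le y hf (by simp [f]) fun _ _ ↦
      mul_one_sub_sq_div_add_sq_le (by positivity)
  rw [dist_eq_norm]
  exact lt_of_pow_lt_pow_left₀ 2 hε.le (hbound.trans_lt (by linarith [pow_pos hε 2]))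

lemma star_mem_of_isClosed (hK : IsClosed (K : Set A)) {a : A} (ha : a ∈ K) : star a ∈ K :=
  mem_of_star_mul_self_mem_s5 hK (by simpa using K.mul_mem_right a (star a) ha)

lemma mul_mem_of_dense (hK : IsClosed (K : Set A)) {D : Set A} (hD : Dense D) {x : A}
    (h : ∀ b ∈ D, x * b ∈ K) (b : A) : x * b ∈ K :=
  hD.induction h (hK.preimage (continuous_const_mul x)) b

end TwoSidedIdeal

namespace UnboundedOp

variable {A : Type*} [NonUnitalCStarAlgebra A] {K : TwoSidedIdeal A} (S : UnboundedOp A)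
  {a c : A}

lemma star_mul_eq_of_essential (hK : K.Essential)
    (h : ∀ b ∈ S.dom, b ∈ K → star a * S.toFun b = star c * b) :
    ∀ b ∈ S.dom, star a * S.toFun b = star c * b := by
  intro b hb
  refine sub_eq_zero.mp (hK _ fun k hk ↦ ?_)
  have hbk := h (b * k) (S.mul_mem b hb k) (K.mul_mem_left b k hk)
  rw [S.map_mul' b hb k] at hbk
  rw [sub_mul, mul_assoc, mul_assoc, hbk, sub_self]

lemma mem_of_star_mul_eq (hK : IsClosed (K : Set A)) (ha : a ∈ K)
    (h : ∀ b ∈ S.dom, star a * S.toFun b = star c * b) : c ∈ K := by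
  have hca : ∀ b ∈ S.dom, star c * b ∈ K := fun b hb ↦
    h b hb ▸ K.mul_mem_right _ _ (K.star_mem_of_isClosed hK ha)
  exact K.mem_of_star_mul_self_mem_s5 hK (K.mul_mem_of_dense hK S.dense_dom hca c)

end UnboundedOp

theorem stmt_5_general {A : Type*} [NonUnitalCStarAlgebra A]
    (K : TwoSidedIdeal A) (hKc : IsClosed (K : Set A)) (hKe : K.Essential)
    (S : UnboundedOp A) :
    ∀ a ∈ K, ∀ c : A,
      ((c ∈ K ∧ ∀ b ∈ S.dom, b ∈ K → star a * S.toFun b = star c * b) ↔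
        (∀ b ∈ S.dom, star a * S.toFun b = star c * b)) := by
  intro a ha c
  exact ⟨fun ⟨_, hres⟩ ↦ S.star_mul_eq_of_essential hKe hres,
    fun h ↦ ⟨S.mem_of_star_mul_eq hKc ha h, fun b hb _ ↦ h b hb⟩⟩

/-- `(S|_K)* = S*|_K`: for `a ∈ K`, the element `c` is a value of the adjoint of the
restriction `S|_K` (with respect to the `K`-valued inner product) if and only if it is a
value of the adjoint `S*` at `a`. -/
theorem stmt_5 {A : Type*} [NonUnitalCStarAlgebra A]
    (K : TwoSidedIdeal A) (hKc : IsClosed (K : Set A)) (hKe : K.Essential)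
    (S : UnboundedOp A) (hS : S.Semiregular) (hSc : S.IsClosedOp) :
    ∀ a ∈ K, ∀ c : A,
      ((c ∈ K ∧ ∀ b ∈ S.dom, b ∈ K → star a * S.toFun b = star c * b) ↔
        (∀ b ∈ S.dom, star a * S.toFun b = star c * b)) :=
  stmt_5_general K hKc hKe S
end

section
/- Let A be a C*-algebra, K a closed essential ideal, and S, T semiregular operators on A with S|_K = T|_K (equal domains D(S) ∩ K = D(T) ∩ K and equal values there). Then S = T on D(S) ∩ D(T). -/
theorem TwoSidedIdeal.Essential.eq_of_forall_mul_eq {A : Type*} [NonUnitalCStarAlgebra A]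
    {K : TwoSidedIdeal A} (hK : K.Essential) {x y : A} (h : ∀ k ∈ K, x * k = y * k) :
    x = y :=
  sub_eq_zero.mp <| hK _ fun k hk => by rw [sub_mul, h k hk, sub_self]

theorem stmt_6_general {A : Type*} [NonUnitalCStarAlgebra A]
    (K : TwoSidedIdeal A) (hKe : K.Essential)
    (S T : UnboundedOp A)
    (hval : ∀ a ∈ S.dom ∩ (K : Set A), S.toFun a = T.toFun a) :
    ∀ a ∈ S.dom ∩ T.dom, S.toFun a = T.toFun a := by
  rintro a ⟨haS, haT⟩
  refine hKe.eq_of_forall_mul_eq fun k hk => ?_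
  rw [← S.map_mul' a haS k, ← T.map_mul' a haT k]
  exact hval (a * k) ⟨S.mul_mem a haS k, K.mul_mem_left a k hk⟩

/-- If two semiregular operators `S`, `T` on `A` have the same restriction to a closed
essential ideal `K`, then `S = T` on `D(S) ∩ D(T)`. -/
theorem stmt_6 {A : Type*} [NonUnitalCStarAlgebra A]
    (K : TwoSidedIdeal A) (hKc : IsClosed (K : Set A)) (hKe : K.Essential)
    (S T : UnboundedOp A) (hS : S.Semiregular) (hT : T.Semiregular)
    (hdom : S.dom ∩ (K : Set A) = T.dom ∩ (K : Set A))
    (hval : ∀ a ∈ S.dom ∩ (K : Set A), S.toFun a = T.toFun a) :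
    ∀ a ∈ S.dom ∩ T.dom, S.toFun a = T.toFun a :=
  stmt_6_general K hKe S T hval
end

section
/- Let A be a C*-algebra, K a closed essential ideal, and S, T semiregular operators on A with S|_K = T|_K. Then S* = T* (equal domains and equal values). -/
namespace UnboundedOp

variable {A : Type*} [NonUnitalCStarAlgebra A] {K : TwoSidedIdeal A}

theorem adjoint_rel_of_eqOn_ideal (hK : K.Essential) {S T : UnboundedOp A}
    (hST : ∀ b ∈ T.dom ∩ (K : Set A), b ∈ S.dom ∧ S.toFun b = T.toFun b) {a c : A}
    (h : ∀ b ∈ S.dom, star a * S.toFun b = star c * b) :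
    ∀ b ∈ T.dom, star a * T.toFun b = star c * b := by
  intro b hb
  -- `b k` with `k ∈ K` lies where `S` and `T` agree; essentiality of `K` then removes the `k`.
  refine hK.eq_of_forall_mul_eq fun k hk => ?_
  obtain ⟨hbkS, hST_bk⟩ := hST (b * k) ⟨T.mul_mem b hb k, K.mul_mem_left b k hk⟩
  rw [mul_assoc, ← T.map_mul' b hb k, ← hST_bk, h _ hbkS, mul_assoc]

theorem adjoint_rel_iff_of_eqOn_ideal (hK : K.Essential) {S T : UnboundedOp A}
    (hdom : S.dom ∩ (K : Set A) = T.dom ∩ (K : Set A))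
    (hval : ∀ b ∈ S.dom ∩ (K : Set A), S.toFun b = T.toFun b) (a c : A) :
    (∀ b ∈ S.dom, star a * S.toFun b = star c * b) ↔
      (∀ b ∈ T.dom, star a * T.toFun b = star c * b) := by
  constructor
  · refine adjoint_rel_of_eqOn_ideal hK fun b hb => ?_
    rw [← hdom] at hb
    exact ⟨hb.1, hval b hb⟩
  · refine adjoint_rel_of_eqOn_ideal hK fun b hb => ?_
    exact ⟨(hdom ▸ hb).1, (hval b hb).symm⟩

end UnboundedOp

theorem stmt_7_general {A : Type*} [NonUnitalCStarAlgebra A]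
    (K : TwoSidedIdeal A) (hKe : K.Essential)
    (S T : UnboundedOp A)
    (hdom : S.dom ∩ (K : Set A) = T.dom ∩ (K : Set A))
    (hval : ∀ a ∈ S.dom ∩ (K : Set A), S.toFun a = T.toFun a) :
    S.adjDom = T.adjDom ∧
      ∀ a c : A, ((∀ b ∈ S.dom, star a * S.toFun b = star c * b) ↔
        (∀ b ∈ T.dom, star a * T.toFun b = star c * b)) := by
  have h := UnboundedOp.adjoint_rel_iff_of_eqOn_ideal hKe hdom hval
  exact ⟨Set.ext fun a => exists_congr (h a), h⟩

/-- If two semiregular operators `S`, `T` on `A` have the same restriction to a closed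
essential ideal `K`, then `S* = T*` (equal domains and equal values). -/
theorem stmt_7 {A : Type*} [NonUnitalCStarAlgebra A]
    (K : TwoSidedIdeal A) (hKc : IsClosed (K : Set A)) (hKe : K.Essential)
    (S T : UnboundedOp A) (hS : S.Semiregular) (hT : T.Semiregular)
    (hdom : S.dom ∩ (K : Set A) = T.dom ∩ (K : Set A))
    (hval : ∀ a ∈ S.dom ∩ (K : Set A), S.toFun a = T.toFun a) :
    S.adjDom = T.adjDom ∧
      ∀ a c : A, ((∀ b ∈ S.dom, star a * S.toFun b = star c * b) ↔
        (∀ b ∈ T.dom, star a * T.toFun b = star c * b)) :=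
  stmt_7_general K hKe S T hdom hval
end

section
/- Let A be a C*-algebra, K a closed essential ideal, and S a closed semiregular operator on A such that (S|_K)** = S|_K. Then S** is the maximal closed semiregular operator on A whose restriction to K equals S|_K: any semiregular T on A with T|_K = S|_K satisfies T ⊆ S**, and (S**)|_K = S|_K. -/
namespace UnboundedOp

variable {A : Type*} [NonUnitalCStarAlgebra A]

open Classical in
/-- The value of the adjoint `S*` at `a` (junk value `0` off the adjoint domain). -/
noncomputable def adjFun (S : UnboundedOp A) (a : A) : A :=
  if h : ∃ c : A, ∀ b ∈ S.dom, star a * S.toFun b = star c * b then h.choose else 0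

/-- The domain of the double adjoint `S**`. -/
def adjDom2 (S : UnboundedOp A) : Set A :=
  {a : A | ∃ c : A, ∀ b ∈ S.adjDom, star a * S.adjFun b = star c * b}

open Classical in
/-- The value of the double adjoint `S**` at `a`. -/
noncomputable def adjFun2 (S : UnboundedOp A) (a : A) : A :=
  if h : ∃ c : A, ∀ b ∈ S.adjDom, star a * S.adjFun b = star c * b then h.choose else 0

/-- The domain of the adjoint of the restriction `S|_K`, computed relative to `K`. -/
def adjDomRes (S : UnboundedOp A) (K : Set A) : Set A :=
  {a : A | a ∈ K ∧ ∃ c ∈ K, ∀ b ∈ S.dom ∩ K, star a * S.toFun b = star c * b}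

open Classical in
/-- The value of the adjoint of the restriction `S|_K` at `a`, relative to `K`. -/
noncomputable def adjFunRes (S : UnboundedOp A) (K : Set A) (a : A) : A :=
  if h : ∃ c ∈ K, ∀ b ∈ S.dom ∩ K, star a * S.toFun b = star c * b then h.choose else 0

/-- The domain of the double adjoint `(S|_K)**`, computed relative to `K`. -/
def adjDomRes2 (S : UnboundedOp A) (K : Set A) : Set A :=
  {a : A | a ∈ K ∧ ∃ c ∈ K, ∀ b ∈ S.adjDomRes K, star a * S.adjFunRes K b = star c * b}

open Classical in
/-- The value of the double adjoint `(S|_K)**` at `a`, relative to `K`. -/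
noncomputable def adjFunRes2 (S : UnboundedOp A) (K : Set A) (a : A) : A :=
  if h : ∃ c ∈ K, ∀ b ∈ S.adjDomRes K, star a * S.adjFunRes K b = star c * b then
    h.choose else 0

end UnboundedOp

/-!
Since `K` is essential and domains are right ideals, an identity `⟨b, S d⟩ = ⟨c, d⟩` that holds
for `d ∈ D(S) ∩ K` holds on all of `D(S)`. Hence operators with the same restriction to `K` have
the same adjoint, and every such `T` is contained in `S**`. Conversely, let `a ∈ D(S**) ∩ K` and
`c = S** a`. For `k ∈ K`, `a k` lies in `D((S|_K)**) = D(S|_K)` with `S (a k) = c k`. Density of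
`D(S*)` and closedness of `K` give `c* c ∈ K`, so `h = a* a + c* c ∈ K`, and the functional
calculus of `h` yields `w` with `a h w ≈ a` and `c h w ≈ c`. The points `(a h w, c h w)` of the
graph of `S` converge to `(a, c)`, so `a ∈ D(S)` because `S` is closed.
-/

theorem eq_of_forall_star_mul_eq_of_dense {A : Type*} [NonUnitalCStarAlgebra A] {D : Set A}
    (hD : Dense D) {x y : A} (h : ∀ d ∈ D, star x * d = star y * d) : x = y := by
  have hext : (fun d => star x * d) = fun d => star y * d :=
    Continuous.ext_on hD (by fun_prop) (by fun_prop) h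
  have hxy : star (x - y) * (x - y) = 0 := by
    rw [star_sub, sub_mul, congrFun hext (x - y), sub_self]
  exact sub_eq_zero.mp ((CStarRing.star_mul_self_eq_zero_iff _).mp hxy)

open scoped CStarAlgebra

lemma one_sub_sq_div_sq_mul_le {ε t : ℝ} (hε : 0 < ε) (ht : 0 ≤ t) :
    (1 - (t / (t + ε)) ^ 2) ^ 2 * t ≤ ε := by
  have hs : 0 < t + ε := by positivity
  have h1 : 1 - (t / (t + ε)) ^ 2 = ε * (2 * t + ε) / (t + ε) ^ 2 := by
    field_simp; ring
  rw [h1, div_pow, div_mul_eq_mul_div, div_le_iff₀ (by positivity)]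
  have h2 : (2 * t + ε) ^ 2 ≤ 4 * (t + ε) ^ 2 := by nlinarith
  have h3 : 4 * ε * t ≤ (t + ε) ^ 2 := by nlinarith [sq_nonneg (t - ε)]
  calc (ε * (2 * t + ε)) ^ 2 * t = ε ^ 2 * t * (2 * t + ε) ^ 2 := by ring
    _ ≤ ε ^ 2 * t * (4 * (t + ε) ^ 2) := by gcongr
    _ = ε * (4 * ε * t) * (t + ε) ^ 2 := by ring
    _ ≤ ε * (t + ε) ^ 2 * (t + ε) ^ 2 := by gcongr
    _ = ε * ((t + ε) ^ 2) ^ 2 := by ring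

lemma CStarRing.norm_mul_sq_le_of_star_mul_self_le {B : Type*} [CStarAlgebra B] [PartialOrder B]
    [StarOrderedRing B] {z h : B} (hz : star z * z ≤ h) (y : B) :
    ‖z * y‖ ^ 2 ≤ ‖star y * h * y‖ := by
  rw [sq, ← CStarRing.norm_star_mul_self, star_mul, mul_assoc, ← mul_assoc (star z),
    ← mul_assoc]
  exact CStarAlgebra.norm_le_norm_of_nonneg_of_le
    (star_left_conjugate_nonneg (star_mul_self_nonneg z) y) (star_left_conjugate_le_conjugate hz y)

lemma exists_forall_norm_sub_mul_mul_lt {A : Type*} [NonUnitalCStarAlgebra A] [PartialOrder A]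
    [StarOrderedRing A] {h : A} (hh : 0 ≤ h) {δ : ℝ} (hδ : 0 < δ) :
    ∃ w : A, ∀ z : A, star z * z ≤ h → ‖z - z * (h * w)‖ < δ := by
  set ε : ℝ := δ ^ 2 / 2 with hε_def
  have hε : 0 < ε := by positivity
  -- `|t|` only makes `g` continuous on all of `ℝ`; the spectrum of `h` is nonnegative.
  set g : ℝ → ℝ := fun t => t / (|t| + ε) ^ 2
  set f : ℝ → ℝ := fun t => t * g t
  have hg : Continuous g :=
    continuous_id.div (by fun_prop) fun t => by positivity
  have hf : Continuous f := continuous_id.mul hg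
  have hhw : h * cfcₙ g h = cfcₙ f h := by
    rw [cfcₙ_mul (fun t => t) g h, cfcₙ_id' ℝ h]
  have hf_inr : ((cfcₙ f h : A) : A⁺¹) = cfc f (h : A⁺¹) :=
    Unitization.real_cfcₙ_eq_cfc_inr h f
  have hh' : (0 : A⁺¹) ≤ h := Unitization.inr_nonneg_iff.mpr hh
  refine ⟨cfcₙ g h, fun z hz => ?_⟩
  replace hz : star (z : A⁺¹) * z ≤ h := by
    rwa [← Unitization.inr_star, ← Unitization.inr_mul,
      Unitization.inr_le_iff _ _ (.star_mul_self z) hh.isSelfAdjoint]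
  have hconj : star (1 - cfc f (h : A⁺¹)) * h * (1 - cfc f (h : A⁺¹)) =
      cfc (fun t => (1 - f t) * t * (1 - f t)) (h : A⁺¹) := by
    have hsa : IsSelfAdjoint (1 - cfc f (h : A⁺¹)) := .sub (.one _) (cfc_predicate f _)
    rw [hsa.star_eq, cfc_mul _ (fun t => 1 - f t) _ (by fun_prop) (by fun_prop),
      cfc_mul (fun t => 1 - f t) (fun t => t) _ (by fun_prop) (by fun_prop),
      cfc_sub (fun _ => 1) f _ (by fun_prop) hf.continuousOn, cfc_const_one ℝ _, cfc_id' ℝ _]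
  have hbound : ‖cfc (fun t => (1 - f t) * t * (1 - f t)) (h : A⁺¹)‖ ≤ ε := by
    refine norm_cfc_le hε.le fun t ht => ?_
    have ht0 : 0 ≤ t := spectrum_nonneg_of_nonneg hh' ht
    have hft : (1 - f t) * t * (1 - f t) = (1 - (t / (t + ε)) ^ 2) ^ 2 * t := by
      simp only [f, g, abs_of_nonneg ht0, div_pow, mul_div_assoc', ← sq]
      ring
    rw [hft, Real.norm_of_nonneg (by positivity)]
    exact one_sub_sq_div_sq_mul_le hε ht0
  have hsq : ‖z - z * (h * cfcₙ g h)‖ ^ 2 < δ ^ 2 := by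
    rw [hhw, ← Unitization.norm_inr (𝕜 := ℂ), Unitization.inr_sub, Unitization.inr_mul, hf_inr,
      ← mul_one_sub]
    calc ‖(z : A⁺¹) * (1 - cfc f (h : A⁺¹))‖ ^ 2
        ≤ ‖star (1 - cfc f (h : A⁺¹)) * h * (1 - cfc f (h : A⁺¹))‖ :=
          CStarRing.norm_mul_sq_le_of_star_mul_self_le hz _
      _ ≤ ε := by rw [hconj]; exact hbound
      _ < δ ^ 2 := by rw [hε_def]; linarith [pow_pos hδ 2]
  exact lt_of_pow_lt_pow_left₀ 2 hδ.le hsq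

lemma exists_norm_sub_mul_lt_of_star_mul_self_add {A : Type*} [NonUnitalCStarAlgebra A]
    (a c : A) {δ : ℝ} (hδ : 0 < δ) :
    ∃ w : A, ‖a - a * ((star a * a + star c * c) * w)‖ < δ ∧
      ‖c - c * ((star a * a + star c * c) * w)‖ < δ := by
  let _ : PartialOrder A := CStarAlgebra.spectralOrder A
  have _ : StarOrderedRing A := CStarAlgebra.spectralOrderedRing A
  obtain ⟨w, hw⟩ := exists_forall_norm_sub_mul_mul_lt
    (add_nonneg (star_mul_self_nonneg a) (star_mul_self_nonneg c)) hδ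
  exact ⟨w, hw a (le_add_of_nonneg_right (star_mul_self_nonneg c)),
    hw c (le_add_of_nonneg_left (star_mul_self_nonneg a))⟩

namespace UnboundedOp

variable {A : Type*} [NonUnitalCStarAlgebra A]

section Spec

variable (S : UnboundedOp A) {K : Set A} {a b : A}

theorem adjFun_spec (hb : b ∈ S.adjDom) :
    ∀ d ∈ S.dom, star b * S.toFun d = star (S.adjFun b) * d := by
  have hb : ∃ c : A, ∀ d ∈ S.dom, star b * S.toFun d = star c * d := hb
  rw [adjFun, dif_pos hb]
  exact hb.choose_spec

theorem adjFun2_spec (ha : a ∈ S.adjDom2) :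
    ∀ b ∈ S.adjDom, star a * S.adjFun b = star (S.adjFun2 a) * b := by
  have ha : ∃ c : A, ∀ b ∈ S.adjDom, star a * S.adjFun b = star c * b := ha
  rw [adjFun2, dif_pos ha]
  exact ha.choose_spec

theorem adjFunRes_spec (hb : b ∈ S.adjDomRes K) :
    ∀ d ∈ S.dom ∩ K, star b * S.toFun d = star (S.adjFunRes K b) * d := by
  rw [adjFunRes, dif_pos hb.2]
  exact hb.2.choose_spec.2

theorem adjFunRes2_spec (ha : a ∈ S.adjDomRes2 K) :
    ∀ b ∈ S.adjDomRes K, star a * S.adjFunRes K b = star (S.adjFunRes2 K a) * b := by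
  rw [adjFunRes2, dif_pos ha.2]
  exact ha.2.choose_spec.2

theorem adjFun_eq {c : A} (h : ∀ d ∈ S.dom, star b * S.toFun d = star c * d) :
    S.adjFun b = c :=
  eq_of_forall_star_mul_eq_of_dense S.dense_dom fun d hd => by
    rw [← S.adjFun_spec ⟨c, h⟩ d hd, h d hd]

theorem adjFun2_eq (hS : S.Semiregular) {c : A}
    (h : ∀ b ∈ S.adjDom, star a * S.adjFun b = star c * b) : S.adjFun2 a = c :=
  eq_of_forall_star_mul_eq_of_dense hS fun b hb => by
    rw [← S.adjFun2_spec ⟨c, h⟩ b hb, h b hb]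

theorem star_mul_adjFun (hb : b ∈ S.adjDom) (ha : a ∈ S.dom) :
    star a * S.adjFun b = star (S.toFun a) * b := by
  simpa using (congrArg star (S.adjFun_spec hb a ha)).symm

end Spec

variable {K : TwoSidedIdeal A}

theorem forall_dom_of_forall_dom_inter (hK : K.Essential) (S : UnboundedOp A) {b c : A}
    (h : ∀ d ∈ S.dom ∩ K, star b * S.toFun d = star c * d) :
    ∀ d ∈ S.dom, star b * S.toFun d = star c * d := fun d hd =>
  hK.eq_of_forall_mul_eq fun k hk => by
    have hdk : d * k ∈ S.dom ∩ K := ⟨S.mul_mem d hd k, K.mul_mem_left d k hk⟩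
    rw [mul_assoc, ← S.map_mul' d hd k, h _ hdk, mul_assoc]

theorem adjDomRes_subset (hK : K.Essential) (S : UnboundedOp A) :
    S.adjDomRes K ⊆ S.adjDom := fun _ hb =>
  ⟨_, forall_dom_of_forall_dom_inter hK S (S.adjFunRes_spec hb)⟩

theorem adjFun_eq_adjFunRes (hK : K.Essential) (S : UnboundedOp A) {b : A}
    (hb : b ∈ S.adjDomRes K) : S.adjFun b = S.adjFunRes K b :=
  S.adjFun_eq (forall_dom_of_forall_dom_inter hK S (S.adjFunRes_spec hb))

theorem mul_mem_adjDomRes (S : UnboundedOp A) {b k : A} (hb : b ∈ S.adjDom) (hk : k ∈ K) :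
    b * k ∈ S.adjDomRes K :=
  ⟨K.mul_mem_left b k hk, S.adjFun b * k, K.mul_mem_left _ k hk, fun d hd => by
    rw [star_mul, star_mul, mul_assoc, S.adjFun_spec hb d hd.1, mul_assoc]⟩

theorem eq_of_forall_adjDomRes (hK : K.Essential) {S : UnboundedOp A} (hS : S.Semiregular)
    {x y : A} (h : ∀ b ∈ S.adjDomRes K, star x * b = star y * b) : x = y :=
  eq_of_forall_star_mul_eq_of_dense hS fun b hb => hK.eq_of_forall_mul_eq fun k hk => by
    rw [mul_assoc, h _ (S.mul_mem_adjDomRes hb hk), mul_assoc]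

theorem adjoint_eq_of_restrict_eq (hK : K.Essential) {S T : UnboundedOp A}
    (hdom : T.dom ∩ K = S.dom ∩ K) (hfun : ∀ a ∈ T.dom ∩ K, T.toFun a = S.toFun a)
    {b : A} (hb : b ∈ S.adjDom) : b ∈ T.adjDom ∧ T.adjFun b = S.adjFun b := by
  have h : ∀ d ∈ T.dom, star b * T.toFun d = star (S.adjFun b) * d :=
    forall_dom_of_forall_dom_inter hK T fun d hd => by
      rw [hfun d hd, S.adjFun_spec hb d (hdom ▸ hd).1]
  exact ⟨⟨_, h⟩, T.adjFun_eq h⟩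

theorem adjoint2_extends_of_restrict_eq (hK : K.Essential) {S T : UnboundedOp A}
    (hS : S.Semiregular) (hdom : T.dom ∩ K = S.dom ∩ K)
    (hfun : ∀ a ∈ T.dom ∩ K, T.toFun a = S.toFun a) {a : A} (ha : a ∈ T.dom) :
    a ∈ S.adjDom2 ∧ S.adjFun2 a = T.toFun a := by
  have h : ∀ b ∈ S.adjDom, star a * S.adjFun b = star (T.toFun a) * b := fun b hb => by
    obtain ⟨hbT, hTS⟩ := adjoint_eq_of_restrict_eq hK hdom hfun hb
    rw [← hTS, T.star_mul_adjFun hbT ha]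
  exact ⟨⟨_, h⟩, S.adjFun2_eq hS h⟩

theorem star_mul_adjFun2_mem (hKc : IsClosed (K : Set A)) {S : UnboundedOp A}
    (hS : S.Semiregular) {a : A} (ha : a ∈ S.adjDom2) (haK : a ∈ K) (b : A) :
    star b * S.adjFun2 a ∈ K := by
  have hsub : S.adjDom ⊆ {b : A | star b * S.adjFun2 a ∈ K} := fun b hb => by
    have h := congrArg star (S.adjFun2_spec ha b hb)
    rw [star_mul, star_mul, star_star, star_star] at h
    show star b * S.adjFun2 a ∈ K
    rw [← h]
    exact K.mul_mem_left _ a haK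
  have hclosed : IsClosed {b : A | star b * S.adjFun2 a ∈ K} :=
    hKc.preimage (by fun_prop)
  have hcl := closure_minimal hsub hclosed
  rw [hS.closure_eq] at hcl
  exact hcl (Set.mem_univ b)

theorem mul_mem_dom_of_mem_adjDom2 (hKe : K.Essential) {S : UnboundedOp A}
    (hS : S.Semiregular) (hdom : S.adjDomRes2 (K : Set A) = S.dom ∩ (K : Set A))
    (hfun : ∀ a ∈ S.dom ∩ (K : Set A), S.adjFunRes2 (K : Set A) a = S.toFun a)
    {a k : A} (ha : a ∈ S.adjDom2) (hk : k ∈ K) :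
    a * k ∈ S.dom ∧ S.toFun (a * k) = S.adjFun2 a * k := by
  have h : ∀ b ∈ S.adjDomRes K, star (a * k) * S.adjFunRes K b = star (S.adjFun2 a * k) * b :=
    fun b hb => by
      rw [← adjFun_eq_adjFunRes hKe S hb, star_mul, star_mul, mul_assoc, mul_assoc,
        S.adjFun2_spec ha b (adjDomRes_subset hKe S hb)]
  have hmem : a * k ∈ S.adjDomRes2 K := ⟨K.mul_mem_left a k hk, _, K.mul_mem_left _ k hk, h⟩
  have hmem' : a * k ∈ S.dom ∩ K := hdom ▸ hmem
  refine ⟨hmem'.1, ?_⟩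
  rw [← hfun _ hmem']
  exact eq_of_forall_adjDomRes hKe hS fun b hb => by rw [← S.adjFunRes2_spec hmem b hb, h b hb]

theorem mem_dom_of_mem_adjDom2 (hKc : IsClosed (K : Set A)) (hKe : K.Essential)
    {S : UnboundedOp A} (hS : S.Semiregular) (hSc : S.IsClosedOp)
    (hdom : S.adjDomRes2 (K : Set A) = S.dom ∩ (K : Set A))
    (hfun : ∀ a ∈ S.dom ∩ (K : Set A), S.adjFunRes2 (K : Set A) a = S.toFun a)
    {a : A} (ha : a ∈ S.adjDom2) (haK : a ∈ K) : a ∈ S.dom := by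
  set c := S.adjFun2 a
  have hhK : star a * a + star c * c ∈ K :=
    K.add_mem (K.mul_mem_left _ a haK) (star_mul_adjFun2_mem hKc hS ha haK c)
  suffices (a, c) ∈ closure {p : A × A | p.1 ∈ S.dom ∧ p.2 = S.toFun p.1} from
    (hSc.closure_eq ▸ this).1
  refine Metric.mem_closure_iff.mpr fun δ hδ => ?_
  obtain ⟨w, haw, hcw⟩ := exists_norm_sub_mul_lt_of_star_mul_self_add a c hδ
  obtain ⟨hd, hval⟩ := mul_mem_dom_of_mem_adjDom2 hKe hS hdom hfun ha (K.mul_mem_right _ w hhK)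
  refine ⟨(_, c * _), ⟨hd, hval.symm⟩, ?_⟩
  rw [Prod.dist_eq, dist_eq_norm, dist_eq_norm]
  exact max_lt haw hcw

end UnboundedOp

open UnboundedOp in
/-- If `S` is a closed semiregular operator on `A` whose restriction to a closed essential
ideal `K` satisfies `(S|_K)** = S|_K`, then `S**` is the maximal closed semiregular
operator on `A` whose restriction to `K` equals `S|_K`: any semiregular `T` with
`T|_K = S|_K` satisfies `T ⊆ S**`, and `(S**)|_K = S|_K`. -/
theorem stmt_8 {A : Type*} [NonUnitalCStarAlgebra A]
    (K : TwoSidedIdeal A) (hKc : IsClosed (K : Set A)) (hKe : K.Essential)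
    (S : UnboundedOp A) (hS : S.Semiregular) (hSc : S.IsClosedOp)
    (hdom : S.adjDomRes2 (K : Set A) = S.dom ∩ (K : Set A))
    (hfun : ∀ a ∈ S.dom ∩ (K : Set A), S.adjFunRes2 (K : Set A) a = S.toFun a) :
    (∀ T : UnboundedOp A, T.Semiregular →
        T.dom ∩ (K : Set A) = S.dom ∩ (K : Set A) →
        (∀ a ∈ T.dom ∩ (K : Set A), T.toFun a = S.toFun a) →
        T.dom ⊆ S.adjDom2 ∧ ∀ a ∈ T.dom, S.adjFun2 a = T.toFun a) ∧
      S.adjDom2 ∩ (K : Set A) = S.dom ∩ (K : Set A) ∧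
      (∀ a ∈ S.dom ∩ (K : Set A), S.adjFun2 a = S.toFun a) := by
  have hSS : ∀ a ∈ S.dom, a ∈ S.adjDom2 ∧ S.adjFun2 a = S.toFun a := fun _ ha =>
    adjoint2_extends_of_restrict_eq hKe hS rfl (fun _ _ => rfl) ha
  refine ⟨fun T _ hTdom hTfun => ⟨fun a ha => ?_, fun a ha => ?_⟩, ?_, fun a ha => (hSS a ha.1).2⟩
  · exact (adjoint2_extends_of_restrict_eq hKe hS hTdom hTfun ha).1
  · exact (adjoint2_extends_of_restrict_eq hKe hS hTdom hTfun ha).2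
  · exact Set.Subset.antisymm
      (fun a ha => ⟨mem_dom_of_mem_adjDom2 hKc hKe hS hSc hdom hfun ha.1 ha.2, ha.2⟩)
      (fun a ha => ⟨(hSS a ha.1).1, ha.2⟩)
end

section
/- Let A be a C*-algebra with closed essential ideal K, S a closed semiregular operator on A whose restriction to K is regular with z-transform z ∈ M(K) (meaning: ‖z‖≤1, (1-z*z)^{1/2}K dense in K, D(S|_K) = (1-z*z)^{1/2}K and S((1-z*z)^{1/2}k) = zk). Then for every a ∈ D(S) there exists c ∈ M(K) such that a = (1-z*z)^{1/2}c and Sa = zc; explicitly c = (1-z*z)^{1/2}a + z*(Sa). -/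
/-- A densely defined operator on a C*-subalgebra `A` of an ambient unital C*-algebra `M`
(playing the role of `M(K)`).  It is presented by a total function `toFun` whose
meaningful values are those on its domain `dom ⊆ A`, which is a dense right ideal of `A`
on which the operator is `ℂ`-linear and right `A`-linear. -/
structure AmbientOp (M : Type*) [CStarAlgebra M] (A : Set M) where
  dom : Set M
  toFun : M → M
  dom_sub : dom ⊆ A
  maps_to : ∀ a ∈ dom, toFun a ∈ A
  dense_dom : ∀ a ∈ A, a ∈ closure dom
  zero_mem : (0 : M) ∈ dom
  add_mem : ∀ a ∈ dom, ∀ b ∈ dom, a + b ∈ dom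
  smul_mem : ∀ (c : ℂ), ∀ a ∈ dom, c • a ∈ dom
  mul_mem : ∀ a ∈ dom, ∀ x ∈ A, a * x ∈ dom
  map_add' : ∀ a ∈ dom, ∀ b ∈ dom, toFun (a + b) = toFun a + toFun b
  map_smul' : ∀ (c : ℂ), ∀ a ∈ dom, toFun (c • a) = c • toFun a
  map_mul' : ∀ a ∈ dom, ∀ x ∈ A, toFun (a * x) = toFun a * x

namespace AmbientOp

variable {M : Type*} [CStarAlgebra M] {A : Set M}

/-- The domain of the adjoint `S*`, relative to the algebra `A`. -/
def adjDom (S : AmbientOp M A) : Set M :=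
  {a : M | a ∈ A ∧ ∃ c ∈ A, ∀ b ∈ S.dom, star a * S.toFun b = star c * b}

/-- `S` is semiregular if its adjoint is densely defined in `A`. -/
def Semiregular (S : AmbientOp M A) : Prop := ∀ a ∈ A, a ∈ closure S.adjDom

/-- `S` is a closed operator if its graph is closed. -/
def IsClosedOp (S : AmbientOp M A) : Prop :=
  IsClosed {p : M × M | p.1 ∈ S.dom ∧ p.2 = S.toFun p.1}

open Classical in
/-- The value of the adjoint `S*` at `a` (junk value `0` off the adjoint domain). -/
noncomputable def adjFun (S : AmbientOp M A) (a : M) : M :=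
  if h : ∃ c ∈ A, ∀ b ∈ S.dom, star a * S.toFun b = star c * b then h.choose else 0

/-- The domain of the double adjoint `S**`, relative to `A`. -/
def adjDom2 (S : AmbientOp M A) : Set M :=
  {a : M | a ∈ A ∧ ∃ c ∈ A, ∀ b ∈ S.adjDom, star a * S.adjFun b = star c * b}

open Classical in
/-- The value of the double adjoint `S**` at `a`. -/
noncomputable def adjFun2 (S : AmbientOp M A) (a : M) : M :=
  if h : ∃ c ∈ A, ∀ b ∈ S.adjDom, star a * S.adjFun b = star c * b then h.choose else 0

end AmbientOp

/-!
Instead of an approximate identity of `K`, multiply by an arbitrary `k ∈ K`: since `D(S)` is a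
right ideal, `a k` lies in the domain of `S|_K`, so `a k = (1 - z*z)^{1/2} k'` and `(S a) k = z k'`.
Because `(1 - z*z)^{1/2}` and `z` form a column isometry, `c k = k'`; the resulting identities
hold after multiplication by every `k ∈ K`, and essentiality of `K` removes `k`.
-/

theorem CFC.sqrt_one_sub_star_mul_self_mul_self {M : Type*} [CStarAlgebra M] [PartialOrder M]
    [StarOrderedRing M] {z : M} (hz : ‖z‖ ≤ 1) :
    CFC.sqrt (1 - star z * z) * CFC.sqrt (1 - star z * z) = 1 - star z * z := by
  refine CFC.sqrt_mul_sqrt_self _ (sub_nonneg.mpr ?_)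
  rw [← CStarAlgebra.norm_le_one_iff_of_nonneg _ (star_mul_self_nonneg z),
    CStarRing.norm_star_mul_self]
  exact mul_le_one₀ hz (norm_nonneg z) hz

theorem eq_of_forall_mul_eq_of_essential {R : Type*} [Ring R] {K : Set R}
    (hK : ∀ m : R, (∀ k ∈ K, m * k = 0) → m = 0) {x y : R} (h : ∀ k ∈ K, x * k = y * k) :
    x = y :=
  sub_eq_zero.mp <| hK _ fun k hk => by rw [sub_mul, h k hk, sub_self]

theorem mul_add_star_mul_eq_of_column {R : Type*} [Ring R] [Star R] {e z a b k k' : R}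
    (hcol : e * e + star z * z = 1) (ha : a * k = e * k') (hb : b * k = z * k') :
    (e * a + star z * b) * k = k' := by
  rw [add_mul, mul_assoc, mul_assoc, ha, hb, ← mul_assoc, ← mul_assoc, ← add_mul, hcol, one_mul]

namespace AmbientOp

variable {M : Type*} [CStarAlgebra M] {A : Set M}

theorem exists_mul_eq_of_restrict {S : AmbientOp M A} {K : Set M} (hKA : K ⊆ A)
    (hKideal : ∀ x, ∀ k ∈ K, x * k ∈ K) {e z : M}
    (hdom : S.dom ∩ K = (fun x => e * x) '' K) (hact : ∀ k ∈ K, S.toFun (e * k) = z * k)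
    {a : M} (ha : a ∈ S.dom) {k : M} (hk : k ∈ K) :
    ∃ k' ∈ K, a * k = e * k' ∧ S.toFun a * k = z * k' := by
  have hmem : a * k ∈ S.dom ∩ K := ⟨S.mul_mem a ha k (hKA hk), hKideal a k hk⟩
  rw [hdom] at hmem
  obtain ⟨k', hk', hak⟩ := hmem
  refine ⟨k', hk', hak.symm, ?_⟩
  rw [← S.map_mul' a ha k (hKA hk), ← hak, hact k' hk']

end AmbientOp

theorem stmt_12_general
    {M : Type*} [CStarAlgebra M] [PartialOrder M] [StarOrderedRing M]
    (A : NonUnitalStarSubalgebra ℂ M)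
    (K : TwoSidedIdeal M)
    (hKA : (K : Set M) ⊆ (A : Set M))
    (hKess : ∀ m : M, (∀ k ∈ K, m * k = 0) → m = 0)
    (S : AmbientOp M (A : Set M))
    (z : M) (hz : ‖z‖ ≤ 1)
    (hzdom : S.dom ∩ (K : Set M) = (fun x => CFC.sqrt (1 - star z * z) * x) '' K)
    (hzact : ∀ k ∈ K, S.toFun (CFC.sqrt (1 - star z * z) * k) = z * k) :
    ∀ a ∈ S.dom, ∃ c : M,
      a = CFC.sqrt (1 - star z * z) * c ∧
      S.toFun a = z * c ∧
      c = CFC.sqrt (1 - star z * z) * a + star z * S.toFun a := by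
  intro a ha
  set e := CFC.sqrt (1 - star z * z)
  have hcol : e * e + star z * z = 1 := by
    rw [CFC.sqrt_one_sub_star_mul_self_mul_self hz, sub_add_cancel]
  set c := e * a + star z * S.toFun a
  have hrep : ∀ k ∈ K, a * k = e * (c * k) ∧ S.toFun a * k = z * (c * k) := fun k hk => by
    obtain ⟨k', -, hak, hSak⟩ :=
      S.exists_mul_eq_of_restrict hKA (fun x k hk => K.mul_mem_left x k hk) hzdom hzact ha hk
    rw [mul_add_star_mul_eq_of_column hcol hak hSak]
    exact ⟨hak, hSak⟩
  refine ⟨c, ?_, ?_, rfl⟩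
  · exact eq_of_forall_mul_eq_of_essential hKess fun k hk => by rw [mul_assoc]; exact (hrep k hk).1
  · exact eq_of_forall_mul_eq_of_essential hKess fun k hk => by rw [mul_assoc]; exact (hrep k hk).2

/-- Let `K ⊆ A ⊆ M = M(K)` with `K` a closed essential ideal, and let `S` be a closed
semiregular operator on `A` whose restriction to `K` is regular with z-transform `z`.
Then every `a ∈ D(S)` satisfies `a = (1-z*z)^{1/2} c` and `S a = z c`, where
`c = (1-z*z)^{1/2} a + z* (S a) ∈ M(K)`. -/
theorem stmt_12
    {M : Type*} [CStarAlgebra M] [PartialOrder M] [StarOrderedRing M]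
    (A : NonUnitalStarSubalgebra ℂ M) (hAc : IsClosed (A : Set M))
    (K : TwoSidedIdeal M) (hKc : IsClosed (K : Set M))
    (hKstar : ∀ k ∈ K, star k ∈ K)
    (hKA : (K : Set M) ⊆ (A : Set M))
    (hKess : ∀ m : M, (∀ k ∈ K, m * k = 0) → m = 0)
    (S : AmbientOp M (A : Set M)) (hS : S.Semiregular) (hSc : S.IsClosedOp)
    (z : M) (hz : ‖z‖ ≤ 1)
    (hzdense : ∀ k ∈ K, k ∈ closure ((fun x => CFC.sqrt (1 - star z * z) * x) '' K))
    (hzdom : S.dom ∩ (K : Set M) = (fun x => CFC.sqrt (1 - star z * z) * x) '' K)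
    (hzact : ∀ k ∈ K, S.toFun (CFC.sqrt (1 - star z * z) * k) = z * k) :
    ∀ a ∈ S.dom, ∃ c : M,
      a = CFC.sqrt (1 - star z * z) * c ∧
      S.toFun a = z * c ∧
      c = CFC.sqrt (1 - star z * z) * a + star z * S.toFun a :=
  stmt_12_general A K hKA hKess S z hz hzdom hzact
end

section
/- Let A, K, S, z be as follows: K ⊆ A ⊆ M(K) with K a closed essential ideal, S a closed semiregular operator on A whose restriction to K is regular with z-transform z. Then z·A ⊆ closure((1 - zz*)^{1/2}·A). -/
open scoped Polynomial

theorem SemiconjBy.aeval {R A : Type*} [CommSemiring R] [Semiring A] [Algebra R A]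
    {z a b : A} (h : SemiconjBy z a b) (q : R[X]) :
    SemiconjBy z (Polynomial.aeval a q) (Polynomial.aeval b q) := by
  induction q using Polynomial.induction_on' with
  | add p q hp hq => simpa only [map_add] using hp.add_right hq
  | monomial n r =>
    simp only [Polynomial.aeval_monomial]
    exact SemiconjBy.mul_right (Algebra.commute_algebraMap_right r z) (h.pow_right n)

section CFC

variable {A : Type*} [CStarAlgebra A]

theorem norm_cfc_sub_aeval_le {a : A} (ha : IsSelfAdjoint a) {f : ℝ → ℝ}
    (hf : ContinuousOn f (spectrum ℝ a)) {q : ℝ[X]} {δ : ℝ} (hδ : 0 ≤ δ)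
    (hq : ∀ x ∈ spectrum ℝ a, |q.eval x - f x| ≤ δ) :
    ‖cfc f a - Polynomial.aeval a q‖ ≤ δ := by
  rw [← cfc_polynomial q a ha, ← cfc_sub f (fun x => q.eval x) a hf q.continuousOn]
  refine norm_cfc_le hδ fun x hx => ?_
  rw [Real.norm_eq_abs, abs_sub_comm]
  exact hq x hx

theorem spectrum_subset_Icc_of_norm_le {a : A} {R : ℝ} (ha : ‖a‖ ≤ R) :
    spectrum ℝ a ⊆ Set.Icc (-R) R := by
  nontriviality A
  exact fun _ hx => abs_le.mp ((spectrum.norm_le_norm_of_mem hx).trans ha)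

theorem SemiconjBy.cfc_real {z a b : A} (ha : IsSelfAdjoint a) (hb : IsSelfAdjoint b)
    (h : SemiconjBy z a b) {f : ℝ → ℝ} (hf : Continuous f) :
    SemiconjBy z (cfc f a) (cfc f b) := by
  set R := max ‖a‖ ‖b‖
  refine eq_of_forall_dist_le fun ε hε => ?_
  set δ := ε / (2 * ‖z‖ + 1)
  have hδ : 0 < δ := by positivity
  obtain ⟨q, hq⟩ := exists_polynomial_near_of_continuousOn (-R) R f hf.continuousOn δ hδ
  have happrox : ∀ c : A, IsSelfAdjoint c → ‖c‖ ≤ R → ‖cfc f c - Polynomial.aeval c q‖ ≤ δ :=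
    fun c hc hcR => norm_cfc_sub_aeval_le hc hf.continuousOn hδ.le
      fun x hx => (hq x (spectrum_subset_Icc_of_norm_le hcR hx)).le
  -- `aeval` is intertwined exactly, so only the two approximation errors remain.
  have hsplit : z * cfc f a - cfc f b * z =
      z * (cfc f a - Polynomial.aeval a q) - (cfc f b - Polynomial.aeval b q) * z := by
    rw [mul_sub, sub_mul, (h.aeval q).eq]
    abel
  calc dist (z * cfc f a) (cfc f b * z)
      ≤ ‖z‖ * ‖cfc f a - Polynomial.aeval a q‖ + ‖cfc f b - Polynomial.aeval b q‖ * ‖z‖ := by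
        rw [dist_eq_norm, hsplit]
        exact (norm_sub_le _ _).trans (add_le_add (norm_mul_le _ _) (norm_mul_le _ _))
    _ ≤ ‖z‖ * δ + δ * ‖z‖ := by
        gcongr
        · exact happrox a ha (le_max_left _ _)
        · exact happrox b hb (le_max_right _ _)
    _ ≤ (2 * ‖z‖ + 1) * δ := by linarith
    _ = ε := mul_div_cancel₀ ε (by positivity)

variable [PartialOrder A] [StarOrderedRing A]

theorem one_sub_star_mul_self_nonneg {z : A} (hz : ‖z‖ ≤ 1) : 0 ≤ 1 - star z * z := by
  refine sub_nonneg.mpr ((CStarAlgebra.norm_le_one_iff_of_nonneg _).mp ?_)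
  rw [CStarRing.norm_star_mul_self]
  nlinarith [norm_nonneg z]

theorem one_sub_self_mul_star_nonneg {z : A} (hz : ‖z‖ ≤ 1) : 0 ≤ 1 - z * star z := by
  simpa using one_sub_star_mul_self_nonneg (z := star z) (by rwa [norm_star])

theorem SemiconjBy.sqrt_one_sub_star_mul_self {z : A} (hz : ‖z‖ ≤ 1) :
    SemiconjBy z (CFC.sqrt (1 - star z * z)) (CFC.sqrt (1 - z * star z)) := by
  have h₁ := one_sub_star_mul_self_nonneg hz
  have h₂ := one_sub_self_mul_star_nonneg hz
  rw [CFC.sqrt_eq_real_sqrt _ h₁, CFC.sqrt_eq_real_sqrt _ h₂,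
    cfcₙ_eq_cfc Real.continuous_sqrt.continuousOn Real.sqrt_zero,
    cfcₙ_eq_cfc Real.continuous_sqrt.continuousOn Real.sqrt_zero]
  refine SemiconjBy.cfc_real (.of_nonneg h₁) (.of_nonneg h₂) ?_ Real.continuous_sqrt
  simp only [SemiconjBy, mul_sub, sub_mul, mul_one, one_mul, mul_assoc]

end CFC

namespace AmbientOp

variable {M : Type*} [CStarAlgebra M] {A : Set M}

theorem mul_eq_mul_toFun_of_semiconjBy (S : AmbientOp M A) {K : TwoSidedIdeal M}
    (hKA : (K : Set M) ⊆ A) (hKess : ∀ m : M, (∀ k ∈ K, m * k = 0) → m = 0)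
    {z c c' : M} (hzc : SemiconjBy z c c') (hdom : S.dom ∩ K ⊆ (c * ·) '' K)
    (hact : ∀ k ∈ K, S.toFun (c * k) = z * k) {d : M} (hd : d ∈ S.dom) :
    z * d = c' * S.toFun d := by
  refine sub_eq_zero.mp (hKess _ fun k hk => ?_)
  obtain ⟨k', hk', hdk⟩ := hdom ⟨S.mul_mem d hd k (hKA hk), K.mul_mem_left d k hk⟩
  have hSdk : S.toFun d * k = z * k' := by
    rw [← S.map_mul' d hd k (hKA hk), ← hdk, hact k' hk']
  rw [sub_mul, sub_eq_zero, mul_assoc, ← hdk, ← mul_assoc, hzc.eq, mul_assoc, mul_assoc, hSdk]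

end AmbientOp

theorem stmt_13_general
    {M : Type*} [CStarAlgebra M] [PartialOrder M] [StarOrderedRing M]
    (A : NonUnitalStarSubalgebra ℂ M)
    (K : TwoSidedIdeal M)
    (hKA : (K : Set M) ⊆ (A : Set M))
    (hKess : ∀ m : M, (∀ k ∈ K, m * k = 0) → m = 0)
    (S : AmbientOp M (A : Set M))
    (z : M) (hz : ‖z‖ ≤ 1)
    (hzdom : S.dom ∩ (K : Set M) = (fun x => CFC.sqrt (1 - star z * z) * x) '' K)
    (hzact : ∀ k ∈ K, S.toFun (CFC.sqrt (1 - star z * z) * k) = z * k) :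
    ∀ a ∈ A, z * a ∈ closure ((fun x => CFC.sqrt (1 - z * star z) * x) '' A) := by
  intro a ha
  have hdom : ∀ d ∈ S.dom, z * d = CFC.sqrt (1 - z * star z) * S.toFun d := fun d hd =>
    S.mul_eq_mul_toFun_of_semiconjBy hKA hKess (.sqrt_one_sub_star_mul_self hz)
      hzdom.subset hzact hd
  refine closure_mono ?_
    (image_closure_subset_closure_image (continuous_const_mul z) ⟨a, S.dense_dom a ha, rfl⟩)
  rintro _ ⟨d, hd, rfl⟩
  exact ⟨S.toFun d, S.maps_to d hd, (hdom d hd).symm⟩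

/-- In the standing setup (`S` closed semiregular on `A`, `S|_K` regular with z-transform
`z`), one has `z·A ⊆ closure((1 - zz*)^{1/2}·A)`. -/
theorem stmt_13
    {M : Type*} [CStarAlgebra M] [PartialOrder M] [StarOrderedRing M]
    (A : NonUnitalStarSubalgebra ℂ M) (hAc : IsClosed (A : Set M))
    (K : TwoSidedIdeal M) (hKc : IsClosed (K : Set M))
    (hKstar : ∀ k ∈ K, star k ∈ K)
    (hKA : (K : Set M) ⊆ (A : Set M))
    (hKess : ∀ m : M, (∀ k ∈ K, m * k = 0) → m = 0)
    (S : AmbientOp M (A : Set M)) (hS : S.Semiregular) (hSc : S.IsClosedOp)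
    (z : M) (hz : ‖z‖ ≤ 1)
    (hzdense : ∀ k ∈ K, k ∈ closure ((fun x => CFC.sqrt (1 - star z * z) * x) '' K))
    (hzdom : S.dom ∩ (K : Set M) = (fun x => CFC.sqrt (1 - star z * z) * x) '' K)
    (hzact : ∀ k ∈ K, S.toFun (CFC.sqrt (1 - star z * z) * k) = z * k) :
    ∀ a ∈ A, z * a ∈ closure ((fun x => CFC.sqrt (1 - z * star z) * x) '' A) :=
  stmt_13_general A K hKA hKess S z hz hzdom hzact
end

section
/- Let A be a C*-algebra, K a closed essential ideal, S a closed semiregular operator on A with S|_K regular with z-transform z. If z ∈ M(A) (i.e., z and z* multiply A into A), then S** is regular: z is the z-transform of a regular operator T on A and S** = T. -/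
section

variable {M : Type*} [CStarAlgebra M]

namespace NonUnitalStarSubalgebra

/-- The multiplier algebra `M(A)`, realised inside `M` as the idealizer of `A`. -/
def idealizer (A : NonUnitalStarSubalgebra ℂ M) : StarSubalgebra ℂ M where
  carrier := {m | ∀ a ∈ A, m * a ∈ A ∧ a * m ∈ A}
  mul_mem' {m n} hm hn a ha := by
    refine ⟨?_, ?_⟩
    · rw [mul_assoc]; exact (hm _ (hn a ha).1).1
    · rw [← mul_assoc]; exact (hn _ (hm a ha).2).2
  add_mem' {m n} hm hn a ha := by
    rw [add_mul, mul_add]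
    exact ⟨add_mem (hm a ha).1 (hn a ha).1, add_mem (hm a ha).2 (hn a ha).2⟩
  algebraMap_mem' c a ha := by
    rw [Algebra.algebraMap_eq_smul_one, smul_mul_assoc, one_mul, mul_smul_comm, mul_one]
    exact ⟨SMulMemClass.smul_mem c ha, SMulMemClass.smul_mem c ha⟩
  star_mem' {m} hm a ha := by
    have h := hm (star a) (star_mem ha)
    refine ⟨?_, ?_⟩
    · simpa using star_mem h.2
    · simpa using star_mem h.1

variable {A : NonUnitalStarSubalgebra ℂ M}

theorem mem_idealizer {m : M} : m ∈ A.idealizer ↔ ∀ a ∈ A, m * a ∈ A ∧ a * m ∈ A :=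
  Iff.rfl

theorem isClosed_idealizer (hA : IsClosed (A : Set M)) : IsClosed (A.idealizer : Set M) := by
  have : (A.idealizer : Set M) = ⋂ a ∈ A, {m | m * a ∈ A ∧ a * m ∈ A} := by
    ext m; simp [mem_idealizer]
  rw [this]
  exact isClosed_biInter fun a _ =>
    (hA.preimage (continuous_mul_const a)).inter (hA.preimage (continuous_const_mul a))

theorem sqrt_mem_idealizer [PartialOrder M] [StarOrderedRing M] (hA : IsClosed (A : Set M))
    {x : M} (hx₀ : 0 ≤ x) (hx : x ∈ A.idealizer) : CFC.sqrt x ∈ A.idealizer := by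
  rw [CFC.sqrt_eq_cfc, cfc_nnreal_eq_real _ _ hx₀]
  exact cfc_mem (hs := isClosed_idealizer hA) _ hx

end NonUnitalStarSubalgebra

theorem star_mul_self_le_one [PartialOrder M] [StarOrderedRing M] {z : M} (hz : ‖z‖ ≤ 1) :
    star z * z ≤ 1 := by
  rw [← CStarAlgebra.norm_le_one_iff_of_nonneg _ (star_mul_self_nonneg z),
    CStarRing.norm_star_mul_self]
  exact mul_le_one₀ hz (norm_nonneg z) hz

theorem eq_of_forall_mul_eq {E D : Set M} (hE : ∀ m : M, (∀ k ∈ E, m * k = 0) → m = 0)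
    (hD : E ⊆ closure D) {x y : M} (h : ∀ d ∈ D, x * d = y * d) : x = y := by
  have hcl : closure D ⊆ {u | x * u = y * u} :=
    closure_minimal h (isClosed_eq (continuous_const_mul x) (continuous_const_mul y))
  refine sub_eq_zero.1 (hE _ fun k hk => ?_)
  rw [sub_mul, hcl (hD hk), sub_self]

/-- `e` plays the role of `(1 - z*z)^{1/2}`. -/
structure IsZTransformPair (A : NonUnitalStarSubalgebra ℂ M) (e z : M) : Prop where
  mul_self_add : e * e + star z * z = 1
  isSelfAdjoint : IsSelfAdjoint e
  commute : Commute e (star z * z)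
  fst_mem : e ∈ A.idealizer
  snd_mem : z ∈ A.idealizer

theorem isZTransformPair_sqrt [PartialOrder M] [StarOrderedRing M]
    {A : NonUnitalStarSubalgebra ℂ M} (hA : IsClosed (A : Set M)) {z : M} (hz : ‖z‖ ≤ 1)
    (hzA : z ∈ A.idealizer) : IsZTransformPair A (CFC.sqrt (1 - star z * z)) z := by
  have hx₀ : 0 ≤ 1 - star z * z := sub_nonneg.2 (star_mul_self_le_one hz)
  refine ⟨?_, .of_nonneg (CFC.sqrt_nonneg _), ?_, ?_, hzA⟩
  · rw [CFC.sqrt_mul_sqrt_self _ hx₀, sub_add_cancel]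
  · rw [CFC.sqrt_eq_cfc]
    exact ((Commute.one_left _).sub_left (Commute.refl _)).cfc_nnreal _
  · exact A.sqrt_mem_idealizer hA hx₀
      (sub_mem (one_mem _) (mul_mem (star_mem hzA) hzA))

namespace AmbientOp

variable {A : NonUnitalStarSubalgebra ℂ M}

theorem choose_eq_of_dense {E D : Set M} {F : M → M} {a w : M}
    (hE : ∀ m : M, (∀ k ∈ E, m * k = 0) → m = 0) (hD : E ⊆ closure D)
    (h : ∃ c ∈ (A : Set M), ∀ b ∈ D, star a * F b = star c * b)
    (hw : ∀ b ∈ D, star a * F b = star w * b) : h.choose = w := by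
  refine star_injective (eq_of_forall_mul_eq hE hD fun b hb => ?_)
  rw [← h.choose_spec.2 b hb, hw b hb]

/-- `K ⊆ A` is an essential ideal and `S|_K` is the regular operator with z-transform `z`. -/
structure IsZTransformOn (S : AmbientOp M A) (K : TwoSidedIdeal M) (e z : M) : Prop where
  subset : (K : Set M) ⊆ A
  essential : ∀ m : M, (∀ k ∈ K, m * k = 0) → m = 0
  dom_inter : S.dom ∩ (K : Set M) = (fun x => e * x) '' K
  apply_mul : ∀ k ∈ K, S.toFun (e * k) = z * k

variable {S : AmbientOp M A} {K : TwoSidedIdeal M} {e z : M}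

theorem adjFun_spec {b : M} (hb : b ∈ S.adjDom) :
    S.adjFun b ∈ A ∧ ∀ d ∈ S.dom, star b * S.toFun d = star (S.adjFun b) * d := by
  rw [adjFun, dif_pos hb.2]
  exact hb.2.choose_spec

namespace IsZTransformOn

variable (hT : S.IsZTransformOn K e z)
include hT

theorem mem_adjDom_of_forall {b w : M} (hb : b ∈ A) (hw : w ∈ A)
    (h : ∀ d ∈ S.dom, star b * S.toFun d = star w * d) :
    b ∈ S.adjDom ∧ S.adjFun b = w := by
  have hex : ∃ c ∈ (A : Set M), ∀ d ∈ S.dom, star b * S.toFun d = star c * d :=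
    ⟨w, hw, h⟩
  refine ⟨⟨hb, hex⟩, ?_⟩
  rw [adjFun, dif_pos hex]
  exact choose_eq_of_dense hT.essential (fun k hk => S.dense_dom k (hT.subset hk)) hex h

theorem mem_adjDom2_of_forall (hreg : S.Semiregular) {a c : M} (ha : a ∈ A) (hc : c ∈ A)
    (h : ∀ b ∈ S.adjDom, star a * S.adjFun b = star c * b) :
    a ∈ S.adjDom2 ∧ S.adjFun2 a = c := by
  have hex : ∃ c ∈ (A : Set M), ∀ b ∈ S.adjDom, star a * S.adjFun b = star c * b :=
    ⟨c, hc, h⟩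
  refine ⟨⟨ha, hex⟩, ?_⟩
  rw [adjFun2, dif_pos hex]
  exact choose_eq_of_dense hT.essential (fun k hk => hreg k (hT.subset hk)) hex h

theorem mul_mem_dom {k : M} (hk : k ∈ K) : e * k ∈ S.dom :=
  (hT.dom_inter.symm ▸ ⟨k, hk, rfl⟩ : e * k ∈ S.dom ∩ (K : Set M)).1

theorem exists_mul_eq_of_mem_dom {d : M} (hd : d ∈ S.dom) {k : M} (hk : k ∈ K) :
    ∃ k' ∈ K, d * k = e * k' ∧ S.toFun d * k = z * k' := by
  obtain ⟨k', hk', hdk⟩ : d * k ∈ (fun x => e * x) '' K :=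
    hT.dom_inter ▸ ⟨S.mul_mem d hd k (hT.subset hk), K.mul_mem_left d k hk⟩
  refine ⟨k', hk', hdk.symm, ?_⟩
  rw [← S.map_mul' d hd k (hT.subset hk), ← hdk, hT.apply_mul k' hk']

section

variable (hp : IsZTransformPair A e z)
include hp

-- The witness is `c = e d + z* (S d)`, because `e*e + z*z = 1`.
theorem exists_eq_mul_of_mem_dom {d : M} (hd : d ∈ S.dom) :
    ∃ c ∈ A, d = e * c ∧ S.toFun d = z * c := by
  set c := e * d + star z * S.toFun d
  have hc : ∀ x k, x * c * k = x * (e * (d * k) + star z * (S.toFun d * k)) := by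
    intro x k
    simp only [c, mul_add, add_mul, mul_assoc]
  have hcancel : ∀ x k', x * (e * (e * k') + star z * (z * k')) = x * k' := by
    intro x k'
    rw [← mul_assoc e, ← mul_assoc (star z), ← add_mul, hp.mul_self_add, one_mul]
  refine ⟨c, A.add_mem (hp.fst_mem d (S.dom_sub hd)).1
    ((star_mem hp.snd_mem) _ (S.maps_to d hd)).1, ?_, ?_⟩ <;>
  refine eq_of_forall_mul_eq hT.essential subset_closure fun k hk => ?_ <;>
  obtain ⟨k', hk', h₁, h₂⟩ := hT.exists_mul_eq_of_mem_dom hd hk <;>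
  rw [hc, h₁, h₂, hcancel]

theorem subset_closure_image_mul : (A : Set M) ⊆ closure ((fun x => e * x) '' A) := by
  refine fun a ha => closure_mono (fun d hd => ?_) (S.dense_dom a ha)
  obtain ⟨c, hc, hdc, -⟩ := hT.exists_eq_mul_of_mem_dom hp hd
  exact ⟨c, hc, hdc.symm⟩

theorem mul_adjFun {b : M} (hb : b ∈ S.adjDom) : e * S.adjFun b = star z * b := by
  have h : star b * z = star (S.adjFun b) * e :=
    eq_of_forall_mul_eq hT.essential subset_closure fun k hk => by
      rw [mul_assoc, mul_assoc, ← hT.apply_mul k hk,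
        (adjFun_spec hb).2 _ (hT.mul_mem_dom hk)]
  simpa [hp.isSelfAdjoint.star_eq] using congrArg star h.symm

theorem mem_adjDom_of_mul_eq {b w : M} (hb : b ∈ A) (hw : w ∈ A)
    (h : e * w = star z * b) : b ∈ S.adjDom ∧ S.adjFun b = w := by
  have hbz : star b * z = star w * e := by
    simpa [hp.isSelfAdjoint.star_eq] using congrArg star h.symm
  refine hT.mem_adjDom_of_forall hb hw fun d hd => ?_
  obtain ⟨c, -, rfl, hdc⟩ := hT.exists_eq_mul_of_mem_dom hp hd
  rw [hdc, ← mul_assoc, hbz, mul_assoc]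

theorem mul_mem_adjDom2 (hreg : S.Semiregular) {a : M} (ha : a ∈ A) :
    e * a ∈ S.adjDom2 ∧ S.adjFun2 (e * a) = z * a :=
  hT.mem_adjDom2_of_forall hreg (hp.fst_mem a ha).1 (hp.snd_mem a ha).1 fun b hb => by
    rw [star_mul, hp.isSelfAdjoint.star_eq, mul_assoc, hT.mul_adjFun hp hb, star_mul,
      mul_assoc]

theorem adjDom2_subset : S.adjDom2 ⊆ (fun x => e * x) '' A := by
  rintro a ⟨ha, c, hc, h⟩
  have key : star a * star z * z = star c * z * e :=
    eq_of_forall_mul_eq hT.essential subset_closure fun k hk => by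
      -- test against `b = z e k ∈ dom S*`, for which `S* b = z* z k`
      have hkA := hT.subset hk
      obtain ⟨hb, hw⟩ := hT.mem_adjDom_of_mul_eq hp
        (hp.snd_mem _ (hp.fst_mem k hkA).1).1
        ((star_mem hp.snd_mem) _ (hp.snd_mem k hkA).1).1
        (by rw [← mul_assoc (star z) z k, ← mul_assoc, hp.commute.eq, mul_assoc, mul_assoc])
      simp only [mul_assoc]
      rw [← hw]
      exact h _ hb
  have key' : star z * (z * a) = e * (star z * c) := by
    simpa [hp.isSelfAdjoint.star_eq, mul_assoc] using congrArg star key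
  refine ⟨e * a + star z * c,
    A.add_mem (hp.fst_mem a ha).1 ((star_mem hp.snd_mem) c hc).1, ?_⟩
  calc e * (e * a + star z * c) = e * (e * a) + star z * (z * a) := by rw [key', mul_add]
    _ = (e * e + star z * z) * a := by rw [add_mul, mul_assoc, mul_assoc]
    _ = a := by rw [hp.mul_self_add, one_mul]

theorem adjDom2_eq (hreg : S.Semiregular) : S.adjDom2 = (fun x => e * x) '' A :=
  (hT.adjDom2_subset hp).antisymm <| by
    rintro _ ⟨a, ha, rfl⟩
    exact (hT.mul_mem_adjDom2 hp hreg ha).1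

end

end IsZTransformOn

end AmbientOp

end

theorem stmt_15_general
    {M : Type*} [CStarAlgebra M] [PartialOrder M] [StarOrderedRing M]
    (A : NonUnitalStarSubalgebra ℂ M) (hAc : IsClosed (A : Set M))
    (K : TwoSidedIdeal M)
    (hKA : (K : Set M) ⊆ (A : Set M))
    (hKess : ∀ m : M, (∀ k ∈ K, m * k = 0) → m = 0)
    (S : AmbientOp M (A : Set M)) (hS : S.Semiregular)
    (z : M) (hz : ‖z‖ ≤ 1)
    (hzdom : S.dom ∩ (K : Set M) = (fun x => CFC.sqrt (1 - star z * z) * x) '' K)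
    (hzact : ∀ k ∈ K, S.toFun (CFC.sqrt (1 - star z * z) * k) = z * k)
    (hzM : ∀ a ∈ A, z * a ∈ A ∧ a * z ∈ A ∧ star z * a ∈ A ∧ a * star z ∈ A) :
    (∀ a ∈ A, a ∈ closure ((fun x => CFC.sqrt (1 - star z * z) * x) '' A)) ∧
    S.adjDom2 = (fun x => CFC.sqrt (1 - star z * z) * x) '' A ∧
    ∀ a ∈ A, S.adjFun2 (CFC.sqrt (1 - star z * z) * a) = z * a := by
  have hp := isZTransformPair_sqrt hAc hz fun a ha => ⟨(hzM a ha).1, (hzM a ha).2.1⟩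
  have hT : S.IsZTransformOn K _ z := ⟨hKA, hKess, hzdom, hzact⟩
  exact ⟨hT.subset_closure_image_mul hp, hT.adjDom2_eq hp hS,
    fun a ha => (hT.mul_mem_adjDom2 hp hS ha).2⟩

/-- In the standing setup, if moreover `z ∈ M(A)` (i.e. `z` and `z*` multiply `A` into
itself), then `S**` is regular: `z` is the z-transform of a regular operator `T` on `A`
(so `(1-z*z)^{1/2}A` is dense in `A`) and `S**` equals `T`, i.e. `S**` has domain
`(1-z*z)^{1/2}·A` and acts by `(1-z*z)^{1/2}a ↦ z a`. -/
theorem stmt_15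
    {M : Type*} [CStarAlgebra M] [PartialOrder M] [StarOrderedRing M]
    (A : NonUnitalStarSubalgebra ℂ M) (hAc : IsClosed (A : Set M))
    (K : TwoSidedIdeal M) (hKc : IsClosed (K : Set M))
    (hKstar : ∀ k ∈ K, star k ∈ K)
    (hKA : (K : Set M) ⊆ (A : Set M))
    (hKess : ∀ m : M, (∀ k ∈ K, m * k = 0) → m = 0)
    (S : AmbientOp M (A : Set M)) (hS : S.Semiregular) (hSc : S.IsClosedOp)
    (z : M) (hz : ‖z‖ ≤ 1)
    (hzdense : ∀ k ∈ K, k ∈ closure ((fun x => CFC.sqrt (1 - star z * z) * x) '' K))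
    (hzdom : S.dom ∩ (K : Set M) = (fun x => CFC.sqrt (1 - star z * z) * x) '' K)
    (hzact : ∀ k ∈ K, S.toFun (CFC.sqrt (1 - star z * z) * k) = z * k)
    (hzM : ∀ a ∈ A, z * a ∈ A ∧ a * z ∈ A ∧ star z * a ∈ A ∧ a * star z ∈ A) :
    (∀ a ∈ A, a ∈ closure ((fun x => CFC.sqrt (1 - star z * z) * x) '' A)) ∧
    S.adjDom2 = (fun x => CFC.sqrt (1 - star z * z) * x) '' A ∧
    ∀ a ∈ A, S.adjFun2 (CFC.sqrt (1 - star z * z) * a) = z * a :=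
  stmt_15_general A hAc K hKA hKess S hS z hz hzdom hzact hzM
end
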